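/- arXiv:2507.23646 — 14 statements merged into one kernel-verified Lean document; each statement's English description precedes it below -/
import Mathlib

section
/- For every fixed real number t > 0, the limit as α → -1 of (4/(1-α²))·((1-α)/2·t + (1+α)/2 - t^{(1-α)/2}) exists and equals t·log t - t + 1. (Here t^{(1-α)/2} denotes the real power rpow.) -/
open Real Filter Topology

/-! The numerator `F` vanishes at `α = -1` and `4 / (1 - α²) = 4 / (1 - α) · 1 / (α + 1)`, so the
expression is `4 / (1 - α)` times the difference quotient of `F` at `-1` and converges to
`2 F'(-1) = t log t - t + 1`. -/

theorem HasDerivAt.tendsto_div_sub_of_eq_zero {𝕜 : Type*} [NontriviallyNormedField 𝕜]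
    {f : 𝕜 → 𝕜} {f' a : 𝕜} (hf : HasDerivAt f f' a) (hfa : f a = 0) :
    Tendsto (fun x => f x / (x - a)) (𝓝[≠] a) (𝓝 f') := by
  refine hf.tendsto_slope.congr fun x => ?_
  rw [slope_def_field, hfa, sub_zero]

theorem hasDerivAt_alphaGenerator_numerator {t : ℝ} (ht : 0 < t) :
    HasDerivAt (fun α : ℝ => (1 - α) / 2 * t + (1 + α) / 2 - t ^ ((1 - α) / 2))
      ((t * log t - t + 1) / 2) (-1) := by
  have hexp : HasDerivAt (fun α : ℝ => (1 - α) / 2) (-1 / 2) (-1) := by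
    simpa using ((hasDerivAt_id (-1 : ℝ)).const_sub 1).div_const 2
  have hlin : HasDerivAt (fun α : ℝ => (1 + α) / 2) (1 / 2) (-1) := by
    simpa using ((hasDerivAt_id (-1 : ℝ)).const_add 1).div_const 2
  refine (((hexp.mul_const t).add hlin).sub (hexp.const_rpow ht)).congr_deriv ?_
  norm_num
  ring

/-- For fixed `t > 0`, the limit as `α → -1` of
`(4/(1-α²))·((1-α)/2·t + (1+α)/2 - t^{(1-α)/2})` equals `t·log t - t + 1`. -/
theorem alpha_div_generator_limit_neg_one (t : ℝ) (ht : 0 < t) :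
    Tendsto (fun α : ℝ =>
        (4 / (1 - α ^ 2)) * ((1 - α) / 2 * t + (1 + α) / 2 - t ^ ((1 - α) / 2)))
      (𝓝[≠] (-1 : ℝ)) (𝓝 (t * Real.log t - t + 1)) := by
  have hquot := (hasDerivAt_alphaGenerator_numerator ht).tendsto_div_sub_of_eq_zero (by norm_num)
  have hcoef : Tendsto (fun α : ℝ => 4 / (1 - α)) (𝓝[≠] (-1)) (𝓝 2) := by
    have : ContinuousAt (fun α : ℝ => 4 / (1 - α)) (-1) := by fun_prop (disch := norm_num)
    convert this.tendsto.mono_left nhdsWithin_le_nhds using 2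
    norm_num
  have hlim : 2 * ((t * log t - t + 1) / 2) = t * log t - t + 1 := by ring
  rw [← hlim]
  refine (hcoef.mul hquot).congr fun α => ?_
  rw [show (1 : ℝ) - α ^ 2 = (1 - α) * (α - -1) by ring, ← div_div]
  ring
end

section
/- For every fixed real number t > 0, the limit as α → 1 of (4/(1-α²))·((1-α)/2·t + (1+α)/2 - t^{(1-α)/2}) exists and equals -log t + t - 1. (Here t^{(1-α)/2} denotes the real power rpow.) -/
open Real Filter Topology

/-!
Substituting `s = (1 - α) / 2`, so that `1 - α² = 4 s (1 - s)` and `(1 + α) / 2 = 1 - s`, the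
expression becomes `(t - 1 - (t ^ s - 1) / s) / (1 - s)`. As `α → 1` we have `s → 0`, and
`(t ^ s - 1) / s` tends to `log t`, the derivative of `s ↦ t ^ s` at `0`.
-/

theorem Real.tendsto_inv_mul_rpow_sub_one_nhdsNE {t : ℝ} (ht : 0 < t) :
    Tendsto (fun s : ℝ => s⁻¹ * (t ^ s - 1)) (𝓝[≠] 0) (𝓝 (log t)) := by
  simpa using ((hasStrictDerivAt_const_rpow ht 0).hasDerivAt).tendsto_slope_zero

theorem four_div_one_sub_sq_mul_eq {α : ℝ} (h₁ : α ≠ 1) (h₂ : α ≠ -1) (t y : ℝ) :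
    4 / (1 - α ^ 2) * ((1 - α) / 2 * t + (1 + α) / 2 - y) =
      (t - 1 - ((1 - α) / 2)⁻¹ * (y - 1)) / (1 - (1 - α) / 2) := by
  have h₁' : 1 - α ≠ 0 := sub_ne_zero.mpr h₁.symm
  have h₂' : 1 + α ≠ 0 := fun h => h₂ (by linarith)
  rw [show 1 - α ^ 2 = (1 - α) * (1 + α) by ring, show 1 - (1 - α) / 2 = (1 + α) / 2 by ring]
  field_simp
  ring

/-- For fixed `t > 0`, the limit as `α → 1` of
`(4/(1-α²))·((1-α)/2·t + (1+α)/2 - t^{(1-α)/2})` equals `-log t + t - 1`. -/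
theorem alpha_div_generator_limit_one (t : ℝ) (ht : 0 < t) :
    Tendsto (fun α : ℝ =>
        (4 / (1 - α ^ 2)) * ((1 - α) / 2 * t + (1 + α) / 2 - t ^ ((1 - α) / 2)))
      (𝓝[≠] (1 : ℝ)) (𝓝 (-Real.log t + t - 1)) := by
  have hs : Tendsto (fun α : ℝ => (1 - α) / 2) (𝓝[≠] 1) (𝓝[≠] 0) := by
    simpa using (((hasDerivAt_id (1 : ℝ)).const_sub 1).div_const 2).tendsto_nhdsNE (by norm_num)
  have hlim : Tendsto (fun s : ℝ => (t - 1 - s⁻¹ * (t ^ s - 1)) / (1 - s)) (𝓝[≠] 0)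
      (𝓝 (-Real.log t + t - 1)) := by
    have h := ((tendsto_const_nhds (x := t - 1)).sub (tendsto_inv_mul_rpow_sub_one_nhdsNE ht)).div
      (((tendsto_const_nhds (x := (1 : ℝ))).sub tendsto_id).mono_left nhdsWithin_le_nhds)
      (by norm_num)
    rwa [show (t - 1 - log t) / (1 - 0) = -log t + t - 1 by ring] at h
  refine (hlim.comp hs).congr' ?_
  have hne : ∀ᶠ α : ℝ in 𝓝[≠] 1, α ≠ -1 :=
    nhdsWithin_le_nhds (eventually_ne_nhds (by norm_num))
  filter_upwards [self_mem_nhdsWithin, hne] with α h₁ h₂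
  exact (four_div_one_sub_sq_mul_eq h₁ h₂ t _).symm
end

section
/- Let a ∈ (0,2), β ∈ (0,1), and λ, μ > 0. Then the function x ↦ (β·e^{-λx} + (1-β)·e^{-μx} - e^{-(βλ+(1-β)μ)x})·x^{-1-a} is Lebesgue integrable on the interval (0,∞). (Although each of the three summands separately gives a divergent integral against x^{-1-a} near 0, the combination vanishes to second order at x = 0, making the product integrable.) -/
/-!
Write `φ t = e^{-t} - 1 + t`, so that `0 ≤ φ t ≤ t²/2` for `t ≥ 0`. Since `βλ + (1-β)μ` is the
same convex combination of `λ` and `μ` as the one weighting the exponentials, the linear terms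
cancel and the integrand's prefactor equals `β φ(λx) + (1-β) φ(μx) - φ((βλ+(1-β)μ)x) = O(x²)`,
which makes `x^{-1-a}` times it integrable near `0` because `a < 2`. Away from `0` the prefactor
lies in `[-1, 1]`, and `x^{-1-a}` is integrable at infinity because `a > 0`.
-/

open Real Set MeasureTheory

lemma cubic_le_exp_of_nonneg {t : ℝ} (ht : 0 ≤ t) : 1 + t + t ^ 2 / 2 + t ^ 3 / 6 ≤ exp t := by
  have h := sum_le_exp_of_nonneg ht 4
  norm_num [Finset.sum_range_succ, Nat.factorial] at h
  linarith

lemma exp_neg_le_one_sub_add_sq_div_two {t : ℝ} (ht : 0 ≤ t) : exp (-t) ≤ 1 - t + t ^ 2 / 2 := by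
  have hcubic := cubic_le_exp_of_nonneg ht
  have hquad : 0 < 1 - t + t ^ 2 / 2 := by nlinarith [sq_nonneg (t - 1)]
  rw [exp_neg, inv_le_iff_one_le_mul₀ (exp_pos t)]
  calc (1 : ℝ) ≤ (1 - t + t ^ 2 / 2) * (1 + t + t ^ 2 / 2 + t ^ 3 / 6) := by
        nlinarith [pow_nonneg ht 3, pow_nonneg ht 4, pow_nonneg ht 5]
    _ ≤ (1 - t + t ^ 2 / 2) * exp t := by gcongr

lemma abs_exp_neg_sub_one_add_le {t : ℝ} (ht : 0 ≤ t) : |exp (-t) - 1 + t| ≤ t ^ 2 / 2 := by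
  rw [abs_of_nonneg (by linarith [one_sub_le_exp_neg t])]
  linarith [exp_neg_le_one_sub_add_sq_div_two ht]

lemma abs_convexComb_exp_neg_sub_le_sq {β lam mu x : ℝ} (hβ0 : 0 ≤ β) (hβ1 : β ≤ 1)
    (hlam : 0 ≤ lam) (hmu : 0 ≤ mu) (hx : 0 ≤ x) :
    |β * exp (-(lam * x)) + (1 - β) * exp (-(mu * x))
        - exp (-((β * lam + (1 - β) * mu) * x))|
      ≤ (lam ^ 2 + mu ^ 2 + (β * lam + (1 - β) * mu) ^ 2) / 2 * x ^ 2 := by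
  set nu := β * lam + (1 - β) * mu
  have hnu : 0 ≤ nu := by positivity
  have hsplit : β * exp (-(lam * x)) + (1 - β) * exp (-(mu * x)) - exp (-(nu * x))
      = β * (exp (-(lam * x)) - 1 + lam * x) + (1 - β) * (exp (-(mu * x)) - 1 + mu * x)
        - (exp (-(nu * x)) - 1 + nu * x) := by ring
  have hl := abs_exp_neg_sub_one_add_le (mul_nonneg hlam hx)
  have hm := abs_exp_neg_sub_one_add_le (mul_nonneg hmu hx)
  have hn := abs_exp_neg_sub_one_add_le (mul_nonneg hnu hx)
  have hl' : |β * (exp (-(lam * x)) - 1 + lam * x)| ≤ (lam * x) ^ 2 / 2 := by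
    rw [abs_mul, abs_of_nonneg hβ0]
    exact (mul_le_of_le_one_left (abs_nonneg _) hβ1).trans hl
  have hm' : |(1 - β) * (exp (-(mu * x)) - 1 + mu * x)| ≤ (mu * x) ^ 2 / 2 := by
    rw [abs_mul, abs_of_nonneg (sub_nonneg.mpr hβ1)]
    exact (mul_le_of_le_one_left (abs_nonneg _) (by linarith)).trans hm
  rw [hsplit]
  linarith [abs_sub (β * (exp (-(lam * x)) - 1 + lam * x)
      + (1 - β) * (exp (-(mu * x)) - 1 + mu * x)) (exp (-(nu * x)) - 1 + nu * x),
    abs_add_le (β * (exp (-(lam * x)) - 1 + lam * x))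
      ((1 - β) * (exp (-(mu * x)) - 1 + mu * x))]

lemma abs_convexComb_exp_neg_sub_le_one {β lam mu x : ℝ} (hβ0 : 0 ≤ β) (hβ1 : β ≤ 1)
    (hlam : 0 ≤ lam) (hmu : 0 ≤ mu) (hx : 0 ≤ x) :
    |β * exp (-(lam * x)) + (1 - β) * exp (-(mu * x))
        - exp (-((β * lam + (1 - β) * mu) * x))| ≤ 1 := by
  have hle_one {c : ℝ} (hc : 0 ≤ c) : exp (-(c * x)) ≤ 1 :=
    exp_le_one_iff.mpr (neg_nonpos.mpr (mul_nonneg hc hx))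
  have h1 := hle_one hlam
  have h2 := hle_one hmu
  have h3 := hle_one (by positivity : 0 ≤ β * lam + (1 - β) * mu)
  have p1 := exp_pos (-(lam * x))
  have p2 := exp_pos (-(mu * x))
  have p3 := exp_pos (-((β * lam + (1 - β) * mu) * x))
  rw [abs_le]; constructor <;> nlinarith

lemma integrableOn_Ioi_mul_rpow_of_abs_le {f : ℝ → ℝ} {a C M : ℝ} (ha0 : 0 < a) (ha2 : a < 2)
    (hf : AEStronglyMeasurable f (volume.restrict (Ioi 0)))
    (h_near_zero : ∀ x ∈ Ioc (0 : ℝ) 1, |f x| ≤ C * x ^ 2)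
    (h_bounded : ∀ x ∈ Ioi (1 : ℝ), |f x| ≤ M) :
    IntegrableOn (fun x => f x * x ^ (-1 - a)) (Ioi 0) := by
  have hmeas : AEStronglyMeasurable (fun x => f x * x ^ (-1 - a)) (volume.restrict (Ioi 0)) :=
    hf.mul (by fun_prop)
  rw [← Ioc_union_Ioi_eq_Ioi zero_le_one]
  refine IntegrableOn.union ?_ ?_
  · have hdom : IntegrableOn (fun x : ℝ => C * x ^ (1 - a)) (Ioc 0 1) := by
      refine Integrable.const_mul ?_ C
      exact (intervalIntegrable_iff_integrableOn_Ioc_of_le zero_le_one).mp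
        (intervalIntegral.intervalIntegrable_rpow' (by linarith))
    refine hdom.mono' (hmeas.mono_measure (Measure.restrict_mono Ioc_subset_Ioi_self le_rfl)) ?_
    filter_upwards [ae_restrict_mem measurableSet_Ioc] with x hx
    have hsq : x ^ (1 - a) = x ^ 2 * x ^ (-1 - a) := by
      rw [← rpow_natCast, ← rpow_add hx.1]; congr 1; ring
    rw [norm_mul, norm_of_nonneg (rpow_nonneg hx.1.le _), hsq, ← mul_assoc, Real.norm_eq_abs]
    exact mul_le_mul_of_nonneg_right (h_near_zero x hx) (rpow_nonneg hx.1.le _)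
  · have hdom : IntegrableOn (fun x : ℝ => M * x ^ (-1 - a)) (Ioi 1) :=
      (integrableOn_Ioi_rpow_of_lt (by linarith) zero_lt_one).const_mul M
    refine hdom.mono'
      (hmeas.mono_measure (Measure.restrict_mono (Ioi_subset_Ioi zero_le_one) le_rfl)) ?_
    filter_upwards [ae_restrict_mem measurableSet_Ioi] with x hx
    have hx0 : 0 ≤ x := zero_le_one.trans hx.le
    rw [norm_mul, norm_of_nonneg (rpow_nonneg hx0 _), Real.norm_eq_abs]
    exact mul_le_mul_of_nonneg_right (h_bounded x hx) (rpow_nonneg hx0 _)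

/-- For `a ∈ (0,2)`, `β ∈ (0,1)`, `λ, μ > 0`, the function
`x ↦ (β·e^{-λx} + (1-β)·e^{-μx} - e^{-(βλ+(1-β)μ)x})·x^{-1-a}` is Lebesgue
integrable on `(0,∞)`. -/
theorem gts_alpha_integrand_integrable (a β lam mu : ℝ)
    (ha : a ∈ Set.Ioo (0 : ℝ) 2) (hβ : β ∈ Set.Ioo (0 : ℝ) 1)
    (hlam : 0 < lam) (hmu : 0 < mu) :
    IntegrableOn
      (fun x : ℝ =>
        (β * Real.exp (-(lam * x)) + (1 - β) * Real.exp (-(mu * x))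
          - Real.exp (-((β * lam + (1 - β) * mu) * x))) * x ^ (-1 - a))
      (Set.Ioi (0 : ℝ)) := by
  obtain ⟨hβ0, hβ1⟩ := hβ
  exact integrableOn_Ioi_mul_rpow_of_abs_le ha.1 ha.2 (by fun_prop)
    (fun x hx => abs_convexComb_exp_neg_sub_le_sq hβ0.le hβ1.le hlam.le hmu.le hx.1.le)
    (fun x hx => abs_convexComb_exp_neg_sub_le_one hβ0.le hβ1.le hlam.le hmu.le
      (zero_le_one.trans hx.le))
end

section
/- Let a ∈ (0,2) with a ≠ 1, β ∈ (0,1), and λ, μ > 0. Then ∫_0^∞ (β·e^{-λx} + (1-β)·e^{-μx} - e^{-(βλ+(1-β)μ)x})·x^{-1-a} dx = Γ(-a)·(β·λ^a + (1-β)·μ^a - (βλ+(1-β)μ)^a), where Γ denotes the real Gamma function (which is well defined at -a since -a is not a nonpositive integer) and powers are real powers. -/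
/-!
For `0 < a < 1` the kernel `(e^{-tx} - 1) x^{-1-a}` is integrable on `(0, ∞)`, and for `1 < a < 2`
so is `(e^{-tx} - 1 + tx) x^{-1-a}`. Integrating by parts against `x^{-a}` lowers `a` by one, so
one integration by parts (for `a < 1`) or two (for `a > 1`) reach Euler's integral, and the
recurrence `Γ(1 - a) = -a Γ(-a)` shows that both kernels integrate to `Γ(-a) t^a`.
The integrand of the theorem is the combination `β k_λ + (1 - β) k_μ - k_ν` of such kernels with
`ν = βλ + (1 - β)μ`, since the compensating terms are affine in `t`.
-/

open Real Filter Topology MeasureTheory Set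

theorem integrableOn_Ioi_zero_of_abs_le_rpow {f : ℝ → ℝ} {C D p q : ℝ}
    (hf : ContinuousOn f (Ioi 0)) (hp : -1 < p) (hq : q < -1)
    (h₀ : ∀ x ∈ Ioc (0 : ℝ) 1, |f x| ≤ C * x ^ p) (h₁ : ∀ x ∈ Ioi (1 : ℝ), |f x| ≤ D * x ^ q) :
    IntegrableOn f (Ioi 0) := by
  rw [← Ioc_union_Ioi_eq_Ioi zero_le_one, integrableOn_union]
  constructor
  · have hpow : IntegrableOn (fun x : ℝ => x ^ p) (Ioc 0 1) := by
      rw [← intervalIntegrable_iff_integrableOn_Ioc_of_le zero_le_one]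
      exact intervalIntegral.intervalIntegrable_rpow' hp
    refine (hpow.const_mul C).mono' ((hf.mono Ioc_subset_Ioi_self).aestronglyMeasurable
      measurableSet_Ioc) ?_
    filter_upwards [ae_restrict_mem measurableSet_Ioc] with x hx using h₀ x hx
  · refine ((integrableOn_Ioi_rpow_of_lt hq one_pos).const_mul D).mono'
      ((hf.mono (Ioi_subset_Ioi zero_le_one)).aestronglyMeasurable measurableSet_Ioi) ?_
    filter_upwards [ae_restrict_mem measurableSet_Ioi] with x hx using h₁ x hx

section PowerBounds

variable {φ : ℝ → ℝ} {a k l C D : ℝ}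

theorem integrableOn_mul_rpow_neg_one_sub (hφ : ContinuousOn φ (Ioi 0)) (hk : a < k) (hl : l < a)
    (hφk : ∀ x > 0, |φ x| ≤ C * x ^ k) (hφl : ∀ x > 0, |φ x| ≤ D * x ^ l) :
    IntegrableOn (fun x => φ x * x ^ (-1 - a)) (Ioi 0) := by
  have bound : ∀ {c e : ℝ}, (∀ x > 0, |φ x| ≤ c * x ^ e) →
      ∀ x > 0, |φ x * x ^ (-1 - a)| ≤ c * x ^ (e + (-1 - a)) := fun hφe x hx => by
    rw [abs_mul, abs_of_pos (rpow_pos_of_pos hx _), rpow_add hx, ← mul_assoc]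
    exact mul_le_mul_of_nonneg_right (hφe x hx) (rpow_nonneg hx.le _)
  exact integrableOn_Ioi_zero_of_abs_le_rpow
    (hφ.mul (continuousOn_id.rpow_const fun x hx => Or.inl (ne_of_gt hx))) (by linarith)
    (by linarith) (fun x hx => bound hφk x hx.1) (fun x hx => bound hφl x (one_pos.trans hx))

theorem tendsto_mul_rpow_neg_nhdsGT_zero (hk : a < k) (hφk : ∀ x > 0, |φ x| ≤ C * x ^ k) :
    Tendsto (fun x => φ x * x ^ (-a)) (𝓝[>] 0) (𝓝 0) := by
  have hlim : Tendsto (fun x : ℝ => C * x ^ (k - a)) (𝓝[>] 0) (𝓝 0) := by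
    simpa [zero_rpow (sub_pos.2 hk).ne'] using
      ((continuousAt_rpow_const 0 _ (Or.inr (sub_pos.2 hk).le)).tendsto.mono_left
        nhdsWithin_le_nhds).const_mul C
  refine squeeze_zero_norm' ?_ hlim
  filter_upwards [self_mem_nhdsWithin] with x (hx : 0 < x)
  rw [norm_mul, Real.norm_eq_abs, norm_of_nonneg (rpow_nonneg hx.le _), sub_eq_add_neg,
    rpow_add hx, ← mul_assoc]
  exact mul_le_mul_of_nonneg_right (hφk x hx) (rpow_nonneg hx.le _)

theorem tendsto_mul_rpow_neg_atTop (hl : l < a) (hφl : ∀ x > 0, |φ x| ≤ D * x ^ l) :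
    Tendsto (fun x => φ x * x ^ (-a)) atTop (𝓝 0) := by
  have hlim : Tendsto (fun x : ℝ => D * x ^ (l - a)) atTop (𝓝 0) := by
    simpa [neg_sub] using (tendsto_rpow_neg_atTop (sub_pos.2 hl)).const_mul D
  refine squeeze_zero_norm' ?_ hlim
  filter_upwards [eventually_gt_atTop 0] with x hx
  rw [norm_mul, Real.norm_eq_abs, norm_of_nonneg (rpow_nonneg hx.le _), sub_eq_add_neg,
    rpow_add hx, ← mul_assoc]
  exact mul_le_mul_of_nonneg_right (hφl x hx) (rpow_nonneg hx.le _)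

theorem integral_mul_rpow_neg_one_sub_eq {φ' : ℝ → ℝ} (ha : a ≠ 0)
    (hφ : ∀ x > 0, HasDerivAt φ (φ' x) x) (hφ' : IntegrableOn (fun x => φ' x * x ^ (-a)) (Ioi 0))
    (hk : a < k) (hl : l < a)
    (hφk : ∀ x > 0, |φ x| ≤ C * x ^ k) (hφl : ∀ x > 0, |φ x| ≤ D * x ^ l) :
    ∫ x in Ioi 0, φ x * x ^ (-1 - a) = a⁻¹ * ∫ x in Ioi 0, φ' x * x ^ (-a) := by
  have hint := integrableOn_mul_rpow_neg_one_sub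
    (fun x hx => (hφ x hx).continuousAt.continuousWithinAt) hk hl hφk hφl
  have hparts := integral_Ioi_mul_deriv_eq_deriv_mul hφ
    (fun x (hx : 0 < x) => hasDerivAt_rpow_const (p := -a) (Or.inl hx.ne'))
    (IntegrableOn.congr_fun (hint.const_mul (-a)) (fun x _ => by simp only [Pi.mul_apply]; ring_nf)
      measurableSet_Ioi) hφ'
    (tendsto_mul_rpow_neg_nhdsGT_zero hk hφk) (tendsto_mul_rpow_neg_atTop hl hφl)
  simp only [sub_zero, zero_sub, mul_left_comm _ (-a), integral_const_mul,
    show -a - 1 = -1 - a by ring] at hparts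
  field_simp
  linarith

end PowerBounds

section ExpBounds

variable {u : ℝ}

theorem abs_exp_neg_sub_one_le (hu : 0 ≤ u) : |exp (-u) - 1| ≤ u := by
  rw [abs_of_nonpos (by simpa using exp_le_one_iff.2 (neg_nonpos.2 hu))]
  linarith [one_sub_le_exp_neg u]

theorem abs_exp_neg_sub_one_le_one (hu : 0 ≤ u) : |exp (-u) - 1| ≤ 1 := by
  rw [abs_of_nonpos (by simpa using exp_le_one_iff.2 (neg_nonpos.2 hu))]
  linarith [exp_pos (-u)]

theorem abs_exp_neg_sub_one_add_le_s4 (hu : 0 ≤ u) : |exp (-u) - 1 + u| ≤ u := by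
  rw [abs_of_nonneg (by linarith [one_sub_le_exp_neg u])]
  linarith [exp_le_one_iff.2 (neg_nonpos.2 hu)]

theorem abs_exp_neg_sub_one_add_le_sq (hu : 0 ≤ u) : |exp (-u) - 1 + u| ≤ u ^ 2 := by
  rcases le_or_gt u 1 with hu1 | hu1
  · simpa [sub_eq_add_neg, add_assoc] using
      abs_exp_sub_one_sub_id_le (x := -u) (by rwa [abs_neg, abs_of_nonneg hu])
  · nlinarith [abs_exp_neg_sub_one_add_le_s4 hu]

end ExpBounds

section ExpKernels

variable {a t : ℝ}

theorem inv_mul_neg_mul_Gamma_one_sub_mul_rpow (ha : a ≠ 0) (ht : 0 < t) :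
    a⁻¹ * (-t * (Gamma (1 - a) * t ^ (a - 1))) = Gamma (-a) * t ^ a := by
  rw [show 1 - a = -a + 1 by ring, Gamma_add_one (neg_ne_zero.2 ha), rpow_sub_one ht.ne']
  field_simp

theorem integrableOn_exp_neg_mul_mul_rpow (ha : a < 1) (ht : 0 < t) :
    IntegrableOn (fun x => exp (-(t * x)) * x ^ (-a)) (Ioi 0) :=
  (integrableOn_rpow_mul_exp_neg_mul_rpow (p := 1) (s := -a) (by linarith) one_pos ht).congr_fun
    (fun x _ => by dsimp only; rw [rpow_one, neg_mul, mul_comm]) measurableSet_Ioi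

theorem integral_exp_neg_mul_mul_rpow (ha : a < 1) (ht : 0 < t) :
    ∫ x in Ioi 0, exp (-(t * x)) * x ^ (-a) = Gamma (1 - a) * t ^ (a - 1) := by
  have h := integral_rpow_mul_exp_neg_mul_Ioi (a := 1 - a) (by linarith) ht
  rw [one_div, inv_rpow ht.le, ← rpow_neg ht.le, neg_sub, sub_sub_cancel_left] at h
  rw [mul_comm, ← h]
  exact setIntegral_congr_fun measurableSet_Ioi fun x _ => mul_comm _ _

theorem hasDerivAt_exp_neg_mul (t x : ℝ) :
    HasDerivAt (fun x => exp (-(t * x))) (-t * exp (-(t * x))) x := by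
  simpa [mul_comm] using ((hasDerivAt_id x).const_mul t).neg.exp

theorem integrableOn_exp_neg_mul_sub_one_mul_rpow (ha0 : 0 < a) (ha1 : a < 1) (ht : 0 < t) :
    IntegrableOn (fun x => (exp (-(t * x)) - 1) * x ^ (-1 - a)) (Ioi 0) :=
  integrableOn_mul_rpow_neg_one_sub (k := 1) (l := 0) (by fun_prop) ha1 ha0
    (fun x hx => by simpa using abs_exp_neg_sub_one_le (by positivity : 0 ≤ t * x))
    (fun x hx => by simpa using abs_exp_neg_sub_one_le_one (by positivity : 0 ≤ t * x))

theorem integral_exp_neg_mul_sub_one_mul_rpow (ha0 : 0 < a) (ha1 : a < 1) (ht : 0 < t) :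
    ∫ x in Ioi 0, (exp (-(t * x)) - 1) * x ^ (-1 - a) = Gamma (-a) * t ^ a := by
  rw [integral_mul_rpow_neg_one_sub_eq (k := 1) (l := 0) ha0.ne'
    (fun x _ => (hasDerivAt_exp_neg_mul t x).sub_const 1) ?int ha1 ha0
    (fun x hx => by simpa using abs_exp_neg_sub_one_le (by positivity : 0 ≤ t * x))
    (fun x hx => by simpa using abs_exp_neg_sub_one_le_one (by positivity : 0 ≤ t * x))]
  case int =>
    exact IntegrableOn.congr_fun ((integrableOn_exp_neg_mul_mul_rpow ha1 ht).const_mul (-t))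
      (fun x _ => (mul_assoc _ _ _).symm) measurableSet_Ioi
  simp only [mul_assoc, integral_const_mul, integral_exp_neg_mul_mul_rpow ha1 ht]
  exact inv_mul_neg_mul_Gamma_one_sub_mul_rpow ha0.ne' ht

theorem integrableOn_exp_neg_mul_sub_one_add_mul_rpow (ha1 : 1 < a) (ha2 : a < 2) (ht : 0 < t) :
    IntegrableOn (fun x => (exp (-(t * x)) - 1 + t * x) * x ^ (-1 - a)) (Ioi 0) :=
  integrableOn_mul_rpow_neg_one_sub (k := 2) (l := 1) (by fun_prop) ha2 ha1
    (fun x hx => by simpa [mul_pow] using abs_exp_neg_sub_one_add_le_sq (by positivity : 0 ≤ t * x))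
    (fun x hx => by simpa using abs_exp_neg_sub_one_add_le_s4 (by positivity : 0 ≤ t * x))

theorem integral_exp_neg_mul_sub_one_add_mul_rpow (ha1 : 1 < a) (ha2 : a < 2) (ht : 0 < t) :
    ∫ x in Ioi 0, (exp (-(t * x)) - 1 + t * x) * x ^ (-1 - a) = Gamma (-a) * t ^ a := by
  have hshift : ∀ x : ℝ, x ^ (-a) = x ^ (-1 - (a - 1)) := fun x => by ring_nf
  have hderiv : ∀ x > 0, HasDerivAt (fun x => exp (-(t * x)) - 1 + t * x)
      (-t * (exp (-(t * x)) - 1)) x := fun x _ =>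
    (((hasDerivAt_exp_neg_mul t x).sub_const 1).add
      ((hasDerivAt_id x).const_mul t)).congr_deriv (by simp only [mul_one]; ring)
  rw [integral_mul_rpow_neg_one_sub_eq (k := 2) (l := 1) (by positivity) hderiv ?int ha2 ha1
    (fun x hx => by simpa [mul_pow] using abs_exp_neg_sub_one_add_le_sq (by positivity : 0 ≤ t * x))
    (fun x hx => by simpa using abs_exp_neg_sub_one_add_le_s4 (by positivity : 0 ≤ t * x))]
  case int =>
    have h := integrableOn_exp_neg_mul_sub_one_mul_rpow (a := a - 1) (by linarith) (by linarith) ht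
    exact IntegrableOn.congr_fun (h.const_mul (-t)) (fun x _ => by rw [hshift, mul_assoc])
      measurableSet_Ioi
  simp only [mul_assoc, hshift, integral_const_mul,
    integral_exp_neg_mul_sub_one_mul_rpow (a := a - 1) (by linarith) (by linarith) ht, neg_sub]
  exact inv_mul_neg_mul_Gamma_one_sub_mul_rpow (by positivity) ht

end ExpKernels

/-- For `a ∈ (0,2)`, `a ≠ 1`, `β ∈ (0,1)`, `λ, μ > 0`:
`∫_0^∞ (β·e^{-λx} + (1-β)·e^{-μx} - e^{-(βλ+(1-β)μ)x})·x^{-1-a} dx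
  = Γ(-a)·(β·λ^a + (1-β)·μ^a - (βλ+(1-β)μ)^a)`. -/
theorem gts_alpha_integral_eval (a β lam mu : ℝ)
    (ha : a ∈ Set.Ioo (0 : ℝ) 2) (ha1 : a ≠ 1) (hβ : β ∈ Set.Ioo (0 : ℝ) 1)
    (hlam : 0 < lam) (hmu : 0 < mu) :
    ∫ x in Set.Ioi (0 : ℝ),
        (β * Real.exp (-(lam * x)) + (1 - β) * Real.exp (-(mu * x))
          - Real.exp (-((β * lam + (1 - β) * mu) * x))) * x ^ (-1 - a)
      = Real.Gamma (-a) *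
          (β * lam ^ a + (1 - β) * mu ^ a - (β * lam + (1 - β) * mu) ^ a) := by
  set ν := β * lam + (1 - β) * mu
  have hν : 0 < ν := add_pos (mul_pos hβ.1 hlam) (mul_pos (sub_pos.2 hβ.2) hmu)
  obtain ⟨φ, hφ, hcomb⟩ : ∃ φ : ℝ → ℝ → ℝ,
      (∀ t > 0, IntegrableOn (fun x => φ t x * x ^ (-1 - a)) (Ioi 0) ∧
        ∫ x in Ioi 0, φ t x * x ^ (-1 - a) = Gamma (-a) * t ^ a) ∧
      ∀ x, β * φ lam x + (1 - β) * φ mu x - φ ν x =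
        β * exp (-(lam * x)) + (1 - β) * exp (-(mu * x)) - exp (-(ν * x)) := by
    rcases ha1.lt_or_gt with h | h
    · exact ⟨fun t x => exp (-(t * x)) - 1, fun t ht =>
        ⟨integrableOn_exp_neg_mul_sub_one_mul_rpow ha.1 h ht,
          integral_exp_neg_mul_sub_one_mul_rpow ha.1 h ht⟩, fun x => by ring⟩
    · exact ⟨fun t x => exp (-(t * x)) - 1 + t * x, fun t ht =>
        ⟨integrableOn_exp_neg_mul_sub_one_add_mul_rpow h ha.2 ht,
          integral_exp_neg_mul_sub_one_add_mul_rpow h ha.2 ht⟩, fun x => by ring⟩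
  obtain ⟨hintLam, hLam⟩ := hφ lam hlam
  obtain ⟨hintMu, hMu⟩ := hφ mu hmu
  obtain ⟨hintNu, hNu⟩ := hφ ν hν
  calc _ = ∫ x in Ioi 0, β * (φ lam x * x ^ (-1 - a)) + (1 - β) * (φ mu x * x ^ (-1 - a))
        - φ ν x * x ^ (-1 - a) :=
        setIntegral_congr_fun measurableSet_Ioi fun x _ => by rw [← hcomb]; ring
    _ = _ := by
      rw [integral_sub ?_ hintNu, integral_add (hintLam.const_mul β) (hintMu.const_mul (1 - β)),
        integral_const_mul, integral_const_mul, hLam, hMu, hNu]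
      · ring
      · exact (hintLam.const_mul β).add (hintMu.const_mul (1 - β))
end

section
/- Let a ∈ (0,2) with a ≠ 1, T > 0, C > 0, and α ∈ (-1,1) with β = (1-α)/2. Define D : (0,∞) × (0,∞) → ℝ by D(λ,μ) = (4/(1-α²))·(1 - exp(-T·C·Γ(-a)·(β·λ^a + (1-β)·μ^a - (βλ+(1-β)μ)^a))), where Γ is the real Gamma function and powers are real powers. Then for every λ > 0, the negative of the second mixed partial derivative -∂²D/∂λ∂μ evaluated at (λ, λ) equals T·C·Γ(2-a)·λ^{a-2}. -/
/-!
Write `D = k (1 - exp (-K φ))` with `φ(λ, μ) = β λ^a + (1-β) μ^a - (βλ + (1-β)μ)^a` the Jensen gap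
of `t ↦ t^a`. Since `φ` and `∂_μ φ` vanish on the diagonal, there `exp (-K φ) = 1` and the term of
`∂_μ ∂_λ D` carrying `∂_μ φ` drops out, leaving `k K ∂_μ ∂_λ φ(λ, λ) = -k K a (a-1) β (1-β) λ^(a-2)`.
Finally `k β (1-β) = 1` and `a (a-1) Γ(-a) = Γ(2-a)`.
-/

open Real Filter Topology

theorem Real.Gamma_two_sub {a : ℝ} (ha0 : a ≠ 0) (ha1 : a ≠ 1) :
    Gamma (2 - a) = a * (a - 1) * Gamma (-a) := by
  have h1 : Gamma (1 - a) = -a * Gamma (-a) := by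
    rw [show (1 : ℝ) - a = -a + 1 by ring, Gamma_add_one (neg_ne_zero.mpr ha0)]
  rw [show (2 : ℝ) - a = (1 - a) + 1 by ring, Gamma_add_one (sub_ne_zero.mpr ha1.symm), h1]
  ring

theorem deriv_deriv_const_mul_one_sub_exp_neg {F F₁ : ℝ → ℝ → ℝ} {x F₁₂ : ℝ} (k : ℝ)
    (hF₁ : ∀ᶠ μ in 𝓝 x, HasDerivAt (F · μ) (F₁ x μ) x) (hF₁₂ : HasDerivAt (F₁ x) F₁₂ x)
    (hF₂ : HasDerivAt (F x) 0 x) (hF : F x x = 0) :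
    deriv (fun μ => deriv (fun l => k * (1 - exp (-F l μ))) x) x = k * F₁₂ := by
  have hinner : (fun μ => deriv (fun l => k * (1 - exp (-F l μ))) x)
      =ᶠ[𝓝 x] fun μ => k * (F₁ x μ * exp (-F x μ)) := by
    filter_upwards [hF₁] with μ hμ
    convert ((hμ.fun_neg.exp.const_sub 1).const_mul k).deriv using 1
    ring
  have houter := (hF₁₂.fun_mul hF₂.fun_neg.exp).const_mul k
  rw [hinner.deriv_eq, houter.deriv, hF]
  simp

noncomputable def rpowJensenGap (a β l μ : ℝ) : ℝ :=
  β * l ^ a + (1 - β) * μ ^ a - (β * l + (1 - β) * μ) ^ a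

section rpowJensenGap

variable {a β l μ : ℝ}

theorem rpowJensenGap_self : rpowJensenGap a β l l = 0 := by
  rw [rpowJensenGap, show β * l + (1 - β) * l = l by ring]
  ring

theorem hasDerivAt_rpowJensenGap_left (hl : l ≠ 0) (hlμ : β * l + (1 - β) * μ ≠ 0) :
    HasDerivAt (rpowJensenGap a β · μ)
      (a * β * (l ^ (a - 1) - (β * l + (1 - β) * μ) ^ (a - 1))) l := by
  have hlin : HasDerivAt (fun t => β * t + (1 - β) * μ) β l :=
    ((hasDerivAt_id l).const_mul β).add_const _ |>.congr_deriv (mul_one β)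
  exact ((((hasDerivAt_rpow_const (p := a) (Or.inl hl)).const_mul β).add_const
    ((1 - β) * μ ^ a)).fun_sub (hlin.rpow_const (p := a) (Or.inl hlμ))).congr_deriv (by ring)

theorem hasDerivAt_rpowJensenGap_right_self (hl : l ≠ 0) :
    HasDerivAt (rpowJensenGap a β l) 0 l := by
  have hlin : HasDerivAt (fun t => β * l + (1 - β) * t) (1 - β) l :=
    ((hasDerivAt_id l).const_mul (1 - β)).const_add _ |>.congr_deriv (mul_one _)
  have hdiag : β * l + (1 - β) * l = l := by ring
  have h := (((hasDerivAt_rpow_const (p := a) (Or.inl hl)).const_mul (1 - β)).const_add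
    (β * l ^ a)).fun_sub (hlin.rpow_const (p := a) (Or.inl (hdiag.symm ▸ hl)))
  rw [hdiag] at h
  exact h.congr_deriv (by ring)

theorem hasDerivAt_deriv_rpowJensenGap_left_self (hl : l ≠ 0) :
    HasDerivAt (fun μ => a * β * (l ^ (a - 1) - (β * l + (1 - β) * μ) ^ (a - 1)))
      (-(a * (a - 1) * β * (1 - β) * l ^ (a - 2))) l := by
  have hlin : HasDerivAt (fun t => β * l + (1 - β) * t) (1 - β) l :=
    ((hasDerivAt_id l).const_mul (1 - β)).const_add _ |>.congr_deriv (mul_one _)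
  have hdiag : β * l + (1 - β) * l = l := by ring
  have h := ((hlin.rpow_const (p := a - 1) (Or.inl (hdiag.symm ▸ hl))).const_sub
    (l ^ (a - 1))).const_mul (a * β)
  rw [hdiag, show a - 1 - 1 = a - 2 by ring] at h
  exact h.congr_deriv (by ring)

end rpowJensenGap

theorem gts_fisher_metric_general (a T C α β : ℝ)
    (ha : a ∈ Set.Ioo (0 : ℝ) 2) (ha1 : a ≠ 1)
    (hα : α ∈ Set.Ioo (-1 : ℝ) 1) (hβ : β = (1 - α) / 2)
    (lam : ℝ) (hlam : 0 < lam) :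
    -(deriv (fun mu : ℝ =>
        deriv (fun l : ℝ =>
          (4 / (1 - α ^ 2)) *
            (1 - Real.exp (-(T * C * Real.Gamma (-a) *
              (β * l ^ a + (1 - β) * mu ^ a - (β * l + (1 - β) * mu) ^ a))))) lam) lam)
      = T * C * Real.Gamma (2 - a) * lam ^ (a - 2) := by
  obtain ⟨ha0, -⟩ := ha
  obtain ⟨hα1, hα2⟩ := hα
  have hl : lam ≠ 0 := hlam.ne'
  have hk : 4 / (1 - α ^ 2) * (β * (1 - β)) = 1 := by
    rw [hβ]
    field_simp [show 1 - α ^ 2 ≠ 0 by nlinarith]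
    ring
  have hnear : ∀ᶠ mu in 𝓝 lam, β * lam + (1 - β) * mu ≠ 0 :=
    (by fun_prop : Continuous fun mu => β * lam + (1 - β) * mu).continuousAt.eventually_ne
      (by ring_nf; exact hl)
  have hmixed := deriv_deriv_const_mul_one_sub_exp_neg (4 / (1 - α ^ 2))
    (F := fun l mu => T * C * Gamma (-a) * rpowJensenGap a β l mu)
    (F₁ := fun l mu =>
      T * C * Gamma (-a) * (a * β * (l ^ (a - 1) - (β * l + (1 - β) * mu) ^ (a - 1))))
    (hnear.mono fun _ h => (hasDerivAt_rpowJensenGap_left hl h).const_mul _)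
    ((hasDerivAt_deriv_rpowJensenGap_left_self hl).const_mul _)
    (((hasDerivAt_rpowJensenGap_right_self hl).const_mul _).congr_deriv (mul_zero _))
    (by simp only [rpowJensenGap_self, mul_zero])
  refine (congrArg Neg.neg hmixed).trans ?_
  rw [Gamma_two_sub ha0.ne' ha1]
  linear_combination (T * C * Gamma (-a) * a * (a - 1) * lam ^ (a - 2)) * hk

/-- The Fisher information entry of the GTS geometry:
`-∂²D/∂λ∂μ` at `(λ,λ)` equals `T·C·Γ(2-a)·λ^{a-2}`, where
`D(λ,μ) = (4/(1-α²))·(1 - exp(-T·C·Γ(-a)·(β·λ^a+(1-β)·μ^a-(βλ+(1-β)μ)^a)))`. -/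
theorem gts_fisher_metric (a T C α β : ℝ)
    (ha : a ∈ Set.Ioo (0 : ℝ) 2) (ha1 : a ≠ 1) (hT : 0 < T) (hC : 0 < C)
    (hα : α ∈ Set.Ioo (-1 : ℝ) 1) (hβ : β = (1 - α) / 2)
    (lam : ℝ) (hlam : 0 < lam) :
    -(deriv (fun mu : ℝ =>
        deriv (fun l : ℝ =>
          (4 / (1 - α ^ 2)) *
            (1 - Real.exp (-(T * C * Real.Gamma (-a) *
              (β * l ^ a + (1 - β) * mu ^ a - (β * l + (1 - β) * mu) ^ a))))) lam) lam)
      = T * C * Real.Gamma (2 - a) * lam ^ (a - 2) :=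
  gts_fisher_metric_general a T C α β ha ha1 hα hβ lam hlam
end

section
/- Let a ∈ (0,2) with a ≠ 1, T > 0, C > 0, and α ∈ (-1,1) with β = (1-α)/2. Define D : (0,∞) × (0,∞) → ℝ by D(λ,μ) = (4/(1-α²))·(1 - exp(-T·C·Γ(-a)·(β·λ^a + (1-β)·μ^a - (βλ+(1-β)μ)^a))), where Γ is the real Gamma function and powers are real powers. Then for every λ > 0, the negative of the third mixed partial derivative -∂³D/∂λ²∂μ evaluated at (λ, λ) equals -((1-α)/2)·T·C·Γ(3-a)·λ^{a-3}. -/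
/-!
Write `D = K (1 - exp (-M g))` with `K = 4 / (1 - α²)`, `M = T C Γ(-a)` and
`g(x, y) = β x^a + (1 - β) y^a - (β x + (1 - β) y)^a`. On the diagonal `g`, `∂ₓg` and
`∂_y g` all vanish, so differentiating `∂ₓ²D = K M e^{-Mg} (∂ₓ²g - M (∂ₓg)²)` in `y`
leaves only `K M ∂_y∂ₓ²g = -K M a (a-1) (a-2) β² (1-β) x^{a-3}`. Since `K β (1 - β) = 1` and
`Γ(3 - a) = -a (1 - a) (2 - a) Γ(-a)`, this is `β T C Γ(3 - a) x^{a-3}`.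
-/

open Real Filter Topology

theorem Real.Gamma_add_three {s : ℝ} (h0 : s ≠ 0) (h1 : s + 1 ≠ 0) (h2 : s + 2 ≠ 0) :
    Gamma (s + 3) = s * (s + 1) * (s + 2) * Gamma s := by
  rw [show s + 3 = s + 2 + 1 by ring, Gamma_add_one h2, show s + 2 = s + 1 + 1 by ring,
    Gamma_add_one h1, Gamma_add_one h0]
  ring

theorem deriv_deriv_const_mul_one_sub_exp {f f' : ℝ → ℝ} {f'' x : ℝ} (K M : ℝ)
    (hf : ∀ᶠ y in 𝓝 x, HasDerivAt f (f' y) y) (hf' : HasDerivAt f' f'' x) :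
    deriv (deriv fun y => K * (1 - exp (-(M * f y)))) x
      = K * M * exp (-(M * f x)) * (f'' - M * f' x ^ 2) := by
  have hfirst : deriv (fun y => K * (1 - exp (-(M * f y))))
      =ᶠ[𝓝 x] fun y => K * M * f' y * exp (-(M * f y)) := by
    filter_upwards [hf] with y hy
    exact (((hy.const_mul M).neg.exp.const_sub 1).const_mul K).deriv.trans
      (by simp only [Pi.neg_apply]; ring)
  rw [hfirst.deriv_eq]
  exact ((hf'.const_mul (K * M)).mul (hf.self_of_nhds.const_mul M).neg.exp).deriv.trans
    (by simp only [Pi.neg_apply]; ring)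

theorem hasDerivAt_const_mul_exp_mul_sub_sq {u v w : ℝ → ℝ} {v' w' x : ℝ} (K M : ℝ)
    (hu : HasDerivAt u 0 x) (hv : HasDerivAt v v' x) (hw : HasDerivAt w w' x)
    (hu0 : u x = 0) (hv0 : v x = 0) :
    HasDerivAt (fun y => K * M * exp (-(M * u y)) * (w y - M * v y ^ 2)) (K * M * w') x := by
  refine (((hu.const_mul M).neg.exp.const_mul (K * M)).mul
    (hw.sub ((hv.pow 2).const_mul M))).congr_deriv ?_
  simp [hu0, hv0]

section GTSExponent

variable (a β : ℝ) {x y : ℝ}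

noncomputable def gtsExponent (x y : ℝ) : ℝ :=
  β * x ^ a + (1 - β) * y ^ a - (β * x + (1 - β) * y) ^ a

noncomputable def gtsExponent' (x y : ℝ) : ℝ :=
  a * β * (x ^ (a - 1) - (β * x + (1 - β) * y) ^ (a - 1))

noncomputable def gtsExponent'' (x y : ℝ) : ℝ :=
  a * (a - 1) * β * (x ^ (a - 2) - β * (β * x + (1 - β) * y) ^ (a - 2))

theorem gtsExponent_self : gtsExponent a β x x = 0 := by
  simp only [gtsExponent, show β * x + (1 - β) * x = x by ring]
  ring

theorem gtsExponent'_self : gtsExponent' a β x x = 0 := by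
  simp [gtsExponent', show β * x + (1 - β) * x = x by ring]

theorem hasDerivAt_gtsExponent_fst (hx : x ≠ 0) (hxy : β * x + (1 - β) * y ≠ 0) :
    HasDerivAt (gtsExponent a β · y) (gtsExponent' a β x y) x := by
  have hmean := (((hasDerivAt_id' x).const_mul β).add_const ((1 - β) * y)).rpow_const (p := a)
    (Or.inl hxy)
  refine (((((hasDerivAt_id' x).rpow_const (p := a) (Or.inl hx)).const_mul β).add_const
    ((1 - β) * y ^ a)).sub hmean).congr_deriv ?_
  simp only [gtsExponent']
  ring

theorem hasDerivAt_gtsExponent'_fst (hx : x ≠ 0) (hxy : β * x + (1 - β) * y ≠ 0) :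
    HasDerivAt (gtsExponent' a β · y) (gtsExponent'' a β x y) x := by
  have hmean := (((hasDerivAt_id' x).const_mul β).add_const ((1 - β) * y)).rpow_const
    (p := a - 1) (Or.inl hxy)
  refine ((((hasDerivAt_id' x).rpow_const (p := a - 1) (Or.inl hx)).sub hmean).const_mul
    (a * β)).congr_deriv ?_
  simp only [gtsExponent'', show a - 1 - 1 = a - 2 by ring]
  ring

theorem hasDerivAt_gtsExponent_snd_self (hx : x ≠ 0) :
    HasDerivAt (gtsExponent a β x ·) 0 x := by
  have hmean := (((hasDerivAt_id' x).const_mul (1 - β)).const_add (β * x)).rpow_const (p := a)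
    (Or.inl (by simpa [show β * x + (1 - β) * x = x by ring] using hx))
  refine (((((hasDerivAt_id' x).rpow_const (p := a) (Or.inl hx)).const_mul (1 - β)).const_add
    (β * x ^ a)).sub hmean).congr_deriv ?_
  simp only [show β * x + (1 - β) * x = x by ring]
  ring

theorem hasDerivAt_gtsExponent'_snd (hxy : β * x + (1 - β) * y ≠ 0) :
    HasDerivAt (gtsExponent' a β x ·)
      (-(a * (a - 1) * β * (1 - β) * (β * x + (1 - β) * y) ^ (a - 2))) y := by
  have hmean := (((hasDerivAt_id' y).const_mul (1 - β)).const_add (β * x)).rpow_const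
    (p := a - 1) (Or.inl hxy)
  refine ((hmean.const_sub (x ^ (a - 1))).const_mul (a * β)).congr_deriv ?_
  simp only [show a - 1 - 1 = a - 2 by ring]
  ring

theorem hasDerivAt_gtsExponent''_snd (hxy : β * x + (1 - β) * y ≠ 0) :
    HasDerivAt (gtsExponent'' a β x ·)
      (-(a * (a - 1) * (a - 2) * β ^ 2 * (1 - β) * (β * x + (1 - β) * y) ^ (a - 3))) y := by
  have hmean := (((hasDerivAt_id' y).const_mul (1 - β)).const_add (β * x)).rpow_const
    (p := a - 2) (Or.inl hxy)
  refine (((hmean.const_mul β).const_sub (x ^ (a - 2))).const_mul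
    (a * (a - 1) * β)).congr_deriv ?_
  simp only [show a - 2 - 1 = a - 3 by ring]
  ring

end GTSExponent

theorem gts_alpha_connection_general (a T C α β : ℝ)
    (ha : a ∈ Set.Ioo (0 : ℝ) 2) (ha1 : a ≠ 1)
    (hα : α ∈ Set.Ioo (-1 : ℝ) 1) (hβ : β = (1 - α) / 2)
    (lam : ℝ) (hlam : 0 < lam) :
    -(deriv (fun mu : ℝ =>
        deriv (deriv (fun l : ℝ =>
          (4 / (1 - α ^ 2)) *
            (1 - Real.exp (-(T * C * Real.Gamma (-a) *
              (β * l ^ a + (1 - β) * mu ^ a - (β * l + (1 - β) * mu) ^ a)))))) lam) lam)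
      = -((1 - α) / 2) * T * C * Real.Gamma (3 - a) * lam ^ (a - 3) := by
  obtain ⟨ha0, ha2⟩ := ha
  obtain ⟨hα1, hα2⟩ := hα
  have hmean_pos {x y : ℝ} (hx : 0 < x) (hy : 0 < y) : 0 < β * x + (1 - β) * y := by
    rw [hβ]; nlinarith
  set K := 4 / (1 - α ^ 2)
  set M := T * C * Gamma (-a)
  have hsecond : (fun mu => deriv (deriv fun l =>
        K * (1 - exp (-(M * (β * l ^ a + (1 - β) * mu ^ a - (β * l + (1 - β) * mu) ^ a))))) lam)
      =ᶠ[𝓝 lam] fun mu => K * M * exp (-(M * gtsExponent a β lam mu)) *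
        (gtsExponent'' a β lam mu - M * gtsExponent' a β lam mu ^ 2) := by
    filter_upwards [Ioi_mem_nhds hlam] with mu hmu
    refine deriv_deriv_const_mul_one_sub_exp (f := (gtsExponent a β · mu)) K M ?_
      (hasDerivAt_gtsExponent'_fst a β hlam.ne' (hmean_pos hlam hmu).ne')
    filter_upwards [Ioi_mem_nhds hlam] with l hl
    exact hasDerivAt_gtsExponent_fst a β hl.ne' (hmean_pos hl hmu).ne'
  have hthird := hasDerivAt_const_mul_exp_mul_sub_sq K M
    (hasDerivAt_gtsExponent_snd_self a β hlam.ne')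
    (hasDerivAt_gtsExponent'_snd a β (hmean_pos hlam hlam).ne')
    (hasDerivAt_gtsExponent''_snd a β (hmean_pos hlam hlam).ne')
    (gtsExponent_self a β) (gtsExponent'_self a β)
  rw [hsecond.deriv_eq, hthird.deriv, show 3 - a = -a + 3 by ring,
    Gamma_add_three (by linarith) (by contrapose! ha1; linarith) (by linarith),
    show β * lam + (1 - β) * lam = lam by ring, hβ]
  have hα_ne : 1 - α ^ 2 ≠ 0 := by nlinarith
  simp only [K, M]
  field_simp
  ring

/-- The nonvanishing α-connection component of the GTS geometry:
`-∂³D/∂λ²∂μ` at `(λ,λ)` equals `-((1-α)/2)·T·C·Γ(3-a)·λ^{a-3}`, where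
`D(λ,μ) = (4/(1-α²))·(1 - exp(-T·C·Γ(-a)·(β·λ^a+(1-β)·μ^a-(βλ+(1-β)μ)^a)))`. -/
theorem gts_alpha_connection (a T C α β : ℝ)
    (ha : a ∈ Set.Ioo (0 : ℝ) 2) (ha1 : a ≠ 1) (hT : 0 < T) (hC : 0 < C)
    (hα : α ∈ Set.Ioo (-1 : ℝ) 1) (hβ : β = (1 - α) / 2)
    (lam : ℝ) (hlam : 0 < lam) :
    -(deriv (fun mu : ℝ =>
        deriv (deriv (fun l : ℝ =>
          (4 / (1 - α ^ 2)) *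
            (1 - Real.exp (-(T * C * Real.Gamma (-a) *
              (β * l ^ a + (1 - β) * mu ^ a - (β * l + (1 - β) * mu) ^ a)))))) lam) lam)
      = -((1 - α) / 2) * T * C * Real.Gamma (3 - a) * lam ^ (a - 3) :=
  gts_alpha_connection_general a T C α β ha ha1 hα hβ lam hlam
end

section
/- As a → 0 (along the punctured neighborhood filter of 0 in ℝ restricted to a where Γ(a) is defined), the quantity Γ(a) - 1/a converges to -γ, where Γ is the real Gamma function and γ is the Euler–Mascheroni constant. -/
open Real Filter Topology

theorem Real.Gamma_sub_inv_eq_slope_at_one {a : ℝ} (ha : a ≠ 0) :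
    Gamma a - 1 / a = a⁻¹ * (Gamma (1 + a) - Gamma 1) := by
  rw [add_comm, Gamma_add_one ha, Gamma_one]
  field_simp

/-- As `a → 0` (punctured), `Γ(a) - 1/a → -γ` where `γ` is the
Euler–Mascheroni constant. -/
theorem Gamma_sub_inv_tendsto_neg_eulerMascheroni :
    Filter.Tendsto (fun a : ℝ => Real.Gamma a - 1 / a) (𝓝[≠] (0 : ℝ))
      (𝓝 (-Real.eulerMascheroniConstant)) := by
  refine hasDerivAt_Gamma_one.tendsto_slope_zero.congr' ?_
  filter_upwards [self_mem_nhdsWithin] with a (ha : a ≠ 0)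
  rw [smul_eq_mul, Gamma_sub_inv_eq_slope_at_one ha]
end

section
/- Let β ∈ (0,1) and λ, μ > 0. Then as a → 0 from the right, Γ(-a)·(β·λ^a + (1-β)·μ^a - (βλ+(1-β)μ)^a) converges to log(βλ+(1-β)μ) - β·log λ - (1-β)·log μ, where Γ is the real Gamma function and powers are real powers. -/
/-!
Since `Γ` has a simple pole with residue `1` at `0`, `a * Γ(-a) → -1` as `a → 0`, so
`Γ(-a) * f a = (a * Γ(-a)) * (f a / a) → -f'(0)` for any `f` vanishing at `0` and differentiable
there. Here `f a = β λ^a + (1-β) μ^a - (βλ+(1-β)μ)^a`, whose derivative at `0` is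
`β log λ + (1-β) log μ - log (βλ+(1-β)μ)`.
-/

open Real Filter Topology

namespace Real

theorem tendsto_self_mul_Gamma_nhdsNE_zero :
    Tendsto (fun x : ℝ => x * Gamma x) (𝓝[≠] 0) (𝓝 1) := by
  have hGamma_one : ContinuousAt Gamma 1 := by
    refine (differentiableAt_Gamma fun m hm => ?_).continuousAt
    linarith [(m.cast_nonneg : (0 : ℝ) ≤ m)]
  have hcont : ContinuousAt (fun x : ℝ => Gamma (x + 1)) 0 :=
    hGamma_one.comp_of_eq (continuous_add_const 1).continuousAt (zero_add 1)
  rw [show (1 : ℝ) = Gamma (0 + 1) by simp]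
  exact tendsto_nhdsWithin_congr (fun x hx => Gamma_add_one hx)
    (continuousAt_iff_punctured_nhds.mp hcont)

theorem tendsto_self_mul_Gamma_neg_nhdsNE_zero :
    Tendsto (fun x : ℝ => x * Gamma (-x)) (𝓝[≠] 0) (𝓝 (-1)) := by
  have hneg : Tendsto (fun x : ℝ => -x) (𝓝[≠] 0) (𝓝[≠] 0) := by
    have h := Filter.neg_nhdsNE (a := (0 : ℝ))
    rw [neg_zero] at h
    exact h.le
  simpa [neg_mul] using (tendsto_self_mul_Gamma_nhdsNE_zero.comp hneg).neg

theorem tendsto_Gamma_neg_mul_of_hasDerivAt_zero {f : ℝ → ℝ} {f' : ℝ} (hf0 : f 0 = 0)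
    (hf : HasDerivAt f f' 0) :
    Tendsto (fun x : ℝ => Gamma (-x) * f x) (𝓝[≠] 0) (𝓝 (-f')) := by
  have hslope : Tendsto (fun x : ℝ => x⁻¹ * f x) (𝓝[≠] 0) (𝓝 f') := by
    simpa [hf0] using hf.tendsto_slope_zero
  have hprod : Tendsto (fun x : ℝ => x * Gamma (-x) * (x⁻¹ * f x)) (𝓝[≠] 0) (𝓝 (-f')) := by
    simpa using tendsto_self_mul_Gamma_neg_nhdsNE_zero.mul hslope
  refine hprod.congr' ?_
  filter_upwards [self_mem_nhdsWithin] with x (hx : x ≠ 0)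
  field_simp

theorem hasDerivAt_const_rpow_zero {c : ℝ} (hc : 0 < c) :
    HasDerivAt (fun x : ℝ => c ^ x) (log c) 0 := by
  simpa using (hasStrictDerivAt_const_rpow hc 0).hasDerivAt

end Real

/-- As `a → 0⁺`, `Γ(-a)·(β·λ^a + (1-β)·μ^a - (βλ+(1-β)μ)^a)` converges to
`log(βλ+(1-β)μ) - β·log λ - (1-β)·log μ`. -/
theorem cts_to_vg_alpha_term_limit (β lam mu : ℝ)
    (hβ : β ∈ Set.Ioo (0 : ℝ) 1) (hlam : 0 < lam) (hmu : 0 < mu) :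
    Filter.Tendsto
      (fun a : ℝ => Real.Gamma (-a) *
        (β * lam ^ a + (1 - β) * mu ^ a - (β * lam + (1 - β) * mu) ^ a))
      (𝓝[Set.Ioo (0 : ℝ) 1] 0)
      (𝓝 (Real.log (β * lam + (1 - β) * mu)
        - β * Real.log lam - (1 - β) * Real.log mu)) := by
  obtain ⟨hβ0, hβ1⟩ := hβ
  have hmean : 0 < β * lam + (1 - β) * mu := by nlinarith
  have hderiv := (((hasDerivAt_const_rpow_zero hlam).const_mul β).add
    ((hasDerivAt_const_rpow_zero hmu).const_mul (1 - β))).sub (hasDerivAt_const_rpow_zero hmean)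
  have hlim := tendsto_Gamma_neg_mul_of_hasDerivAt_zero (by simp) hderiv
  rw [show log (β * lam + (1 - β) * mu) - β * log lam - (1 - β) * log mu
      = -(β * log lam + (1 - β) * log mu - log (β * lam + (1 - β) * mu)) by ring]
  exact hlim.mono_left (nhdsWithin_mono 0 fun x hx => hx.1.ne')
end

section
/- Let λ, μ > 0. Then as a → 0 from the right (with a avoiding 1), Γ(-a)·((a-1)·λ^a - a·μ·λ^{a-1} + μ^a) converges to μ/λ - 1 + log λ - log μ, where Γ is the real Gamma function and powers are real powers. -/
/-!
Since `a Γ(a) = Γ(a + 1) → 1`, the factor `Γ(-a)` has a simple pole at `0` with residue `-1`,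
while the bracket vanishes at `a = 0`. The limit is therefore minus the derivative of the
bracket at `0`, namely `-(1 - μ/λ - log λ + log μ)`.
-/

open Real Filter Topology

theorem Real.tendsto_self_mul_Gamma_nhds_zero :
    Tendsto (fun x : ℝ => x * Gamma x) (𝓝[≠] 0) (𝓝 1) := by
  have hcont : ContinuousAt (fun x : ℝ => Gamma (x + 1)) 0 :=
    (differentiableAt_Gamma fun m => by
      norm_num; linarith [m.cast_nonneg (α := ℝ)]).continuousAt.comp_of_eq
      (continuous_add_const 1).continuousAt (zero_add 1)
  refine (Gamma_one ▸ zero_add (1 : ℝ) ▸ hcont.tendsto.mono_left nhdsWithin_le_nhds).congr' ?_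
  filter_upwards [self_mem_nhdsWithin] with x hx
  exact Gamma_add_one hx

theorem HasDerivAt.tendsto_Gamma_neg_mul {f : ℝ → ℝ} {f' : ℝ} (hf : HasDerivAt f f' 0)
    (hf0 : f 0 = 0) : Tendsto (fun a => Gamma (-a) * f a) (𝓝[≠] 0) (𝓝 (-f')) := by
  have hneg : Tendsto (fun a : ℝ => -a) (𝓝[≠] 0) (𝓝[≠] 0) :=
    tendsto_nhdsWithin_iff.2
      ⟨(continuous_neg.tendsto' 0 0 neg_zero).mono_left nhdsWithin_le_nhds,
        eventually_nhdsWithin_of_forall fun _ => neg_ne_zero.2⟩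
  have hprod := ((Real.tendsto_self_mul_Gamma_nhds_zero.comp hneg).mul
    (hasDerivAt_iff_tendsto_slope.mp hf)).neg
  rw [one_mul] at hprod
  refine hprod.congr' ?_
  filter_upwards [self_mem_nhdsWithin] with a (ha : a ≠ 0)
  simp only [Function.comp_apply, slope_def_field, hf0, sub_zero]
  field_simp

theorem hasDerivAt_tempered_stable_kl_term (lam mu : ℝ) (hlam : 0 < lam) (hmu : 0 < mu) :
    HasDerivAt (fun a : ℝ => (a - 1) * lam ^ a - a * mu * lam ^ (a - 1) + mu ^ a)
      (1 - mu / lam - log lam + log mu) 0 := by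
  have hpow : ∀ {c : ℝ}, 0 < c → ∀ x : ℝ,
      HasDerivAt (fun a : ℝ => c ^ a) (c ^ x * log c) x :=
    fun hc x => (hasStrictDerivAt_const_rpow hc x).hasDerivAt
  have hshift := (hpow hlam (0 - 1)).comp_sub_const 0 1
  have hsum := (((hasDerivAt_id 0).sub_const 1).mul (hpow hlam 0)).sub
    ((hasDerivAt_mul_const mu).mul hshift) |>.add (hpow hmu 0)
  refine hsum.congr_deriv ?_
  simp only [rpow_zero, mul_one, id_eq, zero_sub, one_mul, neg_mul, rpow_neg_one, zero_mul,
    add_zero, add_left_inj]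
  ring

/-- As `a → 0⁺`, `Γ(-a)·((a-1)·λ^a - a·μ·λ^{a-1} + μ^a)` converges to
`μ/λ - 1 + log λ - log μ`. -/
theorem cts_to_vg_kl_term_limit (lam mu : ℝ) (hlam : 0 < lam) (hmu : 0 < mu) :
    Filter.Tendsto
      (fun a : ℝ => Real.Gamma (-a) *
        ((a - 1) * lam ^ a - a * mu * lam ^ (a - 1) + mu ^ a))
      (𝓝[Set.Ioo (0 : ℝ) 1] 0)
      (𝓝 (mu / lam - 1 + Real.log lam - Real.log mu)) := by
  have hlim := (hasDerivAt_tempered_stable_kl_term lam mu hlam hmu).tendsto_Gamma_neg_mul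
    (by simp)
  have hsub : Set.Ioo (0 : ℝ) 1 ⊆ {0}ᶜ := fun _ ha => ha.1.ne'
  convert hlim.mono_left (nhdsWithin_mono 0 hsub) using 2
  ring
end

section
/- Let β ∈ (0,1) and λ, μ > 0. Then the function x ↦ (β·e^{-λx} + (1-β)·e^{-μx} - e^{-(βλ+(1-β)μ)x})/x is Lebesgue integrable on (0,∞) and ∫_0^∞ (β·e^{-λx} + (1-β)·e^{-μx} - e^{-(βλ+(1-β)μ)x})·x^{-1} dx = log(βλ+(1-β)μ) - β·log λ - (1-β)·log μ. -/
/-!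
Splitting the numerator as `β (e^{-λx} - e^{-νx}) + (1-β) (e^{-μx} - e^{-νx})` with
`ν = βλ + (1-β)μ` reduces the claim to two Frullani integrals
`∫₀^∞ (e^{-ax} - e^{-bx}) / x dx = log b - log a`, whose integrands are dominated by
`|b - a| e^{-min a b · x}`.
-/

open Real Filter Topology MeasureTheory Set

lemma abs_exp_neg_mul_sub_exp_neg_mul_le {a b x : ℝ} (hx : 0 ≤ x) :
    |exp (-(a * x)) - exp (-(b * x))| ≤ |b - a| * x * exp (-(min a b * x)) := by
  wlog hab : a ≤ b generalizing a b
  · rw [abs_sub_comm, abs_sub_comm b a, min_comm]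
    exact this (le_of_not_ge hab)
  have hgap : exp (-(b * x)) ≤ exp (-(a * x)) := exp_le_exp.2 (by nlinarith)
  have hlin : 1 - exp (-((b - a) * x)) ≤ (b - a) * x := by
    linarith [add_one_le_exp (-((b - a) * x))]
  have hsplit : exp (-(a * x)) - exp (-(b * x)) = exp (-(a * x)) * (1 - exp (-((b - a) * x))) := by
    rw [mul_sub, mul_one, ← exp_add]; ring_nf
  rw [abs_of_nonneg (sub_nonneg.2 hgap), abs_of_nonneg (sub_nonneg.2 hab), min_eq_left hab, hsplit]
  nlinarith [exp_pos (-(a * x))]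

lemma integrableOn_exp_neg_mul_sub_exp_neg_mul_div {a b : ℝ} (ha : 0 < a) (hb : 0 < b) :
    IntegrableOn (fun x => (exp (-(a * x)) - exp (-(b * x))) / x) (Ioi 0) := by
  refine Integrable.mono' (((exp_neg_integrableOn_Ioi 0 (lt_min ha hb)).const_mul |b - a|))
    (by fun_prop : Measurable _).aestronglyMeasurable ?_
  filter_upwards [ae_restrict_mem measurableSet_Ioi] with x (hx : 0 < x)
  rw [norm_div, Real.norm_eq_abs, Real.norm_eq_abs, abs_of_pos hx, div_le_iff₀ hx, neg_mul]
  linarith [abs_exp_neg_mul_sub_exp_neg_mul_le (a := a) (b := b) hx.le]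

lemma integral_exp_neg_mul_sub_exp_neg_mul_div {a b : ℝ} (ha : 0 < a) (hb : 0 < b) :
    ∫ x in Ioi 0, (exp (-(a * x)) - exp (-(b * x))) / x = log b - log a := by
  have hcont : Continuous fun x : ℝ => exp (-x) := by fun_prop
  have hf : LocallyIntegrableOn (fun x => exp (-x)) (Ioi 0) :=
    hcont.locallyIntegrable.locallyIntegrableOn _
  have hL : Tendsto (fun x => exp (-x)) (𝓝[>] 0) (𝓝 1) := by
    simpa using (hcont.tendsto 0).mono_left nhdsWithin_le_nhds
  have hint := integrableOn_exp_neg_mul_sub_exp_neg_mul_div ha hb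
  simp_rw [div_eq_inv_mul] at hint ⊢
  simpa [log_div hb.ne' ha.ne'] using
    Frullani.integral_Ioi_eq hf ha hb hL tendsto_exp_neg_atTop_nhds_zero hint

/-- For `β ∈ (0,1)` and `λ, μ > 0`, the function
`x ↦ (β·e^{-λx} + (1-β)·e^{-μx} - e^{-(βλ+(1-β)μ)x})/x` is Lebesgue integrable
on `(0,∞)` and its integral equals `log(βλ+(1-β)μ) - β·log λ - (1-β)·log μ`. -/
theorem vg_alpha_integral_eval (β lam mu : ℝ)
    (hβ : β ∈ Set.Ioo (0 : ℝ) 1) (hlam : 0 < lam) (hmu : 0 < mu) :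
    IntegrableOn
      (fun x : ℝ =>
        (β * Real.exp (-(lam * x)) + (1 - β) * Real.exp (-(mu * x))
          - Real.exp (-((β * lam + (1 - β) * mu) * x))) / x)
      (Set.Ioi (0 : ℝ)) ∧
    ∫ x in Set.Ioi (0 : ℝ),
        (β * Real.exp (-(lam * x)) + (1 - β) * Real.exp (-(mu * x))
          - Real.exp (-((β * lam + (1 - β) * mu) * x))) * x⁻¹
      = Real.log (β * lam + (1 - β) * mu)
          - β * Real.log lam - (1 - β) * Real.log mu := by
  obtain ⟨hβ0, hβ1⟩ := hβ
  set nu := β * lam + (1 - β) * mu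
  have hnu : 0 < nu := by nlinarith
  have hsplit : ∀ x : ℝ, β * exp (-(lam * x)) + (1 - β) * exp (-(mu * x)) - exp (-(nu * x))
      = β * (exp (-(lam * x)) - exp (-(nu * x))) + (1 - β) * (exp (-(mu * x)) - exp (-(nu * x))) :=
    fun x => by ring
  simp_rw [← div_eq_mul_inv, hsplit, add_div, mul_div_assoc]
  have hint_lam := integrableOn_exp_neg_mul_sub_exp_neg_mul_div hlam hnu
  have hint_mu := integrableOn_exp_neg_mul_sub_exp_neg_mul_div hmu hnu
  refine ⟨(hint_lam.const_mul β).add (hint_mu.const_mul (1 - β)), ?_⟩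
  rw [integral_add (hint_lam.const_mul β) (hint_mu.const_mul (1 - β)), integral_const_mul,
    integral_const_mul, integral_exp_neg_mul_sub_exp_neg_mul_div hlam hnu,
    integral_exp_neg_mul_sub_exp_neg_mul_div hmu hnu]
  ring
end

section
/- Let λ, μ > 0. Then the function x ↦ ((μ-λ)·x·e^{-λx} - e^{-λx} + e^{-μx})/x is Lebesgue integrable on (0,∞) and ∫_0^∞ ((μ-λ)·x·e^{-λx} - e^{-λx} + e^{-μx})·x^{-1} dx = μ/λ - 1 + log λ - log μ. -/
/-!
Split the integrand as `(μ - λ) e^{-λx} + x⁻¹ (e^{-μx} - e^{-λx})`. The first summand integrates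
to `μ/λ - 1`; the second is a Frullani integral, equal to `log (λ/μ)`. Its integrability comes
from the tangent-line bound `|e^u - e^v| ≤ |u - v| e^{max u v}`, which dominates it by
`|λ - μ| e^{-min λ μ · x}`.
-/

open Real Filter Topology MeasureTheory Set

namespace Real

lemma exp_sub_exp_le_sub_mul_exp (u v : ℝ) : exp v - exp u ≤ (v - u) * exp v := by
  have h := add_one_le_exp (u - v)
  have hexp : exp u = exp (u - v) * exp v := by rw [← exp_add, sub_add_cancel]
  nlinarith [exp_pos v]

lemma abs_exp_sub_exp_le (u v : ℝ) : |exp u - exp v| ≤ |u - v| * exp (max u v) := by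
  rcases le_total u v with huv | hvu
  · rw [abs_sub_comm, abs_of_nonneg (sub_nonneg.2 (exp_le_exp.2 huv)), abs_sub_comm,
      abs_of_nonneg (sub_nonneg.2 huv), max_eq_right huv]
    exact exp_sub_exp_le_sub_mul_exp u v
  · rw [abs_of_nonneg (sub_nonneg.2 (exp_le_exp.2 hvu)), abs_of_nonneg (sub_nonneg.2 hvu),
      max_eq_left hvu]
    exact exp_sub_exp_le_sub_mul_exp v u

lemma integral_exp_neg_mul_Ioi_zero {c : ℝ} (hc : 0 < c) :
    ∫ x in Ioi (0 : ℝ), exp (-(c * x)) = c⁻¹ := by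
  simpa [neg_mul, ← div_eq_inv_mul] using integral_exp_mul_Ioi (neg_lt_zero.2 hc) 0

lemma integrableOn_exp_neg_mul_Ioi_zero {c : ℝ} (hc : 0 < c) :
    IntegrableOn (fun x => exp (-(c * x))) (Ioi 0) := by
  simpa only [neg_mul] using exp_neg_integrableOn_Ioi 0 hc

lemma integrableOn_inv_mul_exp_neg_mul_sub {a b : ℝ} (ha : 0 < a) (hb : 0 < b) :
    IntegrableOn (fun x => x⁻¹ * (exp (-(a * x)) - exp (-(b * x)))) (Ioi 0) := by
  refine ((integrableOn_exp_neg_mul_Ioi_zero (lt_min ha hb)).const_mul |b - a|).mono' ?_ ?_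
  · exact (by fun_prop : Measurable _).aestronglyMeasurable
  · refine (ae_restrict_iff' measurableSet_Ioi).2 (Eventually.of_forall fun x (hx : 0 < x) => ?_)
    have hmax : max (-(a * x)) (-(b * x)) = -(min a b * x) := by
      rw [min_mul_of_nonneg _ _ hx.le, max_neg_neg]
    calc ‖x⁻¹ * (exp (-(a * x)) - exp (-(b * x)))‖
        = x⁻¹ * |exp (-(a * x)) - exp (-(b * x))| := by
          rw [norm_mul, norm_inv, Real.norm_eq_abs, Real.norm_eq_abs, abs_of_pos hx]
      _ ≤ x⁻¹ * (|-(a * x) - -(b * x)| * exp (-(min a b * x))) := by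
          rw [← hmax]; gcongr; exact abs_exp_sub_exp_le _ _
      _ = |b - a| * exp (-(min a b * x)) := by
          rw [show -(a * x) - -(b * x) = (b - a) * x by ring, abs_mul, abs_of_pos hx]
          field_simp

lemma integral_Ioi_inv_mul_exp_neg_mul_sub {a b : ℝ} (ha : 0 < a) (hb : 0 < b) :
    ∫ x in Ioi 0, x⁻¹ * (exp (-(a * x)) - exp (-(b * x))) = log b - log a := by
  have hcont : Continuous fun x : ℝ => exp (-x) := by fun_prop
  have hL : Tendsto (fun x : ℝ => exp (-x)) (𝓝[>] 0) (𝓝 1) := by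
    simpa using hcont.continuousWithinAt.tendsto (x := 0)
  have h := Frullani.integral_Ioi_eq (hcont.locallyIntegrable.locallyIntegrableOn _) ha hb hL
    tendsto_exp_neg_atTop_nhds_zero (integrableOn_inv_mul_exp_neg_mul_sub ha hb)
  simpa [log_div hb.ne' ha.ne'] using h

end Real

/-- For `λ, μ > 0`, the function
`x ↦ ((μ-λ)·x·e^{-λx} - e^{-λx} + e^{-μx})/x` is Lebesgue integrable on
`(0,∞)` and its integral equals `μ/λ - 1 + log λ - log μ`. -/
theorem vg_kl_integral_eval (lam mu : ℝ) (hlam : 0 < lam) (hmu : 0 < mu) :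
    IntegrableOn
      (fun x : ℝ =>
        ((mu - lam) * x * Real.exp (-(lam * x)) - Real.exp (-(lam * x))
          + Real.exp (-(mu * x))) / x)
      (Set.Ioi (0 : ℝ)) ∧
    ∫ x in Set.Ioi (0 : ℝ),
        ((mu - lam) * x * Real.exp (-(lam * x)) - Real.exp (-(lam * x))
          + Real.exp (-(mu * x))) * x⁻¹
      = mu / lam - 1 + Real.log lam - Real.log mu := by
  have hsplit : ∀ x ∈ Ioi (0 : ℝ),
      ((mu - lam) * x * exp (-(lam * x)) - exp (-(lam * x)) + exp (-(mu * x))) * x⁻¹ =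
        (mu - lam) * exp (-(lam * x)) + x⁻¹ * (exp (-(mu * x)) - exp (-(lam * x))) := by
    intro x (hx : 0 < x)
    field_simp
    ring
  have hexp := (integrableOn_exp_neg_mul_Ioi_zero hlam).const_mul (mu - lam)
  have hfrullani := integrableOn_inv_mul_exp_neg_mul_sub hmu hlam
  refine ⟨IntegrableOn.congr_fun (hexp.add hfrullani)
    (fun x hx => by rw [div_eq_mul_inv, hsplit x hx, Pi.add_apply]) measurableSet_Ioi, ?_⟩
  rw [setIntegral_congr_fun measurableSet_Ioi hsplit, integral_add hexp hfrullani,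
    integral_const_mul, integral_exp_neg_mul_Ioi_zero hlam,
    integral_Ioi_inv_mul_exp_neg_mul_sub hmu hlam]
  field_simp
  ring
end

section
/- Let T > 0, C > 0, and α ∈ (-1,1) with β = (1-α)/2. Define D : (0,∞) × (0,∞) → ℝ by D(λ,μ) = (4/(1-α²))·(1 - exp(-T·C·(log(βλ+(1-β)μ) - β·log λ - (1-β)·log μ))). Then for every λ > 0, the negative of the second mixed partial derivative -∂²D/∂λ∂μ evaluated at (λ, λ) equals T·C/λ². -/
/-!
Write `D(λ, μ) = K (1 - exp (-c φ(λ, μ)))` with `φ` the gap between the logarithms of the weighted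
arithmetic and geometric means of `λ, μ`. Then `∂_λ D = K c ∂_λ φ · exp (-c φ)`, and since `∂_λ φ`
vanishes on the diagonal the product rule leaves only `K c ∂_μ ∂_λ φ (λ, λ) = -K c β (1 - β) / λ²`;
the normalisation `K = 4 / (1 - α²) = 1 / (β (1 - β))` gives `-T C / λ²`.
-/

open Real Filter Topology

noncomputable def logMeanGap (β l μ : ℝ) : ℝ :=
  log (β * l + (1 - β) * μ) - β * log l - (1 - β) * log μ

lemma logMeanGap_self (β x : ℝ) : logMeanGap β x x = 0 := by
  rw [logMeanGap, show β * x + (1 - β) * x = x by ring]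
  ring

lemma hasDerivAt_logMeanGap_left {β l μ : ℝ} (hl : l ≠ 0) (hm : β * l + (1 - β) * μ ≠ 0) :
    HasDerivAt (logMeanGap β · μ) (β / (β * l + (1 - β) * μ) - β / l) l := by
  have hmean : HasDerivAt (fun l => β * l + (1 - β) * μ) β l := by
    simpa using ((hasDerivAt_id l).const_mul β).add_const ((1 - β) * μ)
  exact (((hmean.log hm).sub ((hasDerivAt_log hl).const_mul β)).sub_const
    ((1 - β) * log μ)).congr_deriv (by ring)

lemma differentiableAt_logMeanGap_right {β l μ : ℝ} (hμ : μ ≠ 0)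
    (hm : β * l + (1 - β) * μ ≠ 0) : DifferentiableAt ℝ (logMeanGap β l ·) μ := by
  unfold logMeanGap
  fun_prop (disch := assumption)

lemma hasDerivAt_div_mean_right {β l μ : ℝ} (hm : β * l + (1 - β) * μ ≠ 0) :
    HasDerivAt (fun μ => β / (β * l + (1 - β) * μ))
      (-(β * (1 - β)) / (β * l + (1 - β) * μ) ^ 2) μ := by
  have hmean : HasDerivAt (fun μ => β * l + (1 - β) * μ) (1 - β) μ := by
    simpa using ((hasDerivAt_id μ).const_mul (1 - β)).const_add (β * l)
  exact ((hasDerivAt_const μ β).div hmean hm).congr_deriv (by ring)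

lemma HasDerivAt.const_mul_one_sub_exp_neg {φ : ℝ → ℝ} {φ' x : ℝ} (hφ : HasDerivAt φ φ' x)
    (K c : ℝ) :
    HasDerivAt (fun y => K * (1 - Real.exp (-(c * φ y))))
      (K * c * φ' * Real.exp (-(c * φ x))) x :=
  ((((hφ.const_mul c).neg.exp).const_sub 1).const_mul K).congr_deriv
    (by simp only [Pi.neg_apply]; ring)

lemma HasDerivAt.mul_of_left_eq_zero {u v : ℝ → ℝ} {u' x : ℝ} (hu : HasDerivAt u u' x)
    (hux : u x = 0) (hv : DifferentiableAt ℝ v x) :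
    HasDerivAt (fun y => u y * v y) (u' * v x) x :=
  (hu.mul hv.hasDerivAt).congr_deriv (by simp [hux])

lemma neg_deriv_deriv_divergence_logMeanGap (K c β : ℝ) {lam : ℝ} (hlam : lam ≠ 0) :
    -deriv (fun μ => deriv (fun l => K * (1 - exp (-(c * logMeanGap β l μ)))) lam) lam
      = K * c * (β * (1 - β)) / lam ^ 2 := by
  have hdiag : β * lam + (1 - β) * lam = lam := by ring
  have hmean : ∀ᶠ μ in 𝓝 lam, β * lam + (1 - β) * μ ≠ 0 :=
    ContinuousAt.eventually_ne (by fun_prop) (by rwa [hdiag])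
  have hinner : (fun μ => deriv (fun l => K * (1 - exp (-(c * logMeanGap β l μ)))) lam)
      =ᶠ[𝓝 lam] fun μ => K * c * (β / (β * lam + (1 - β) * μ) - β / lam) *
        exp (-(c * logMeanGap β lam μ)) := by
    filter_upwards [hmean] with μ hμ
    exact ((hasDerivAt_logMeanGap_left hlam hμ).const_mul_one_sub_exp_neg K c).deriv
  have hexp : DifferentiableAt ℝ (fun μ => exp (-(c * logMeanGap β lam μ))) lam :=
    ((differentiableAt_logMeanGap_right hlam (by rwa [hdiag])).const_mul c).neg.exp
  have houter := (((hasDerivAt_div_mean_right (by rwa [hdiag])).sub_const (β / lam)).const_mul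
    (K * c)).mul_of_left_eq_zero (by rw [hdiag]; ring) hexp
  rw [hinner.deriv_eq, houter.deriv, logMeanGap_self, hdiag, mul_zero, neg_zero, exp_zero]
  ring

theorem vg_fisher_metric_general (T C α β : ℝ)
    (hα : α ∈ Set.Ioo (-1 : ℝ) 1) (hβ : β = (1 - α) / 2)
    (lam : ℝ) (hlam : 0 < lam) :
    -(deriv (fun mu : ℝ =>
        deriv (fun l : ℝ =>
          (4 / (1 - α ^ 2)) *
            (1 - Real.exp (-(T * C *
              (Real.log (β * l + (1 - β) * mu)
                - β * Real.log l - (1 - β) * Real.log mu))))) lam) lam)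
      = T * C / lam ^ 2 := by
  have hα2 : 1 - α ^ 2 ≠ 0 := by nlinarith [hα.1, hα.2]
  have hβα : β * (1 - β) = (1 - α ^ 2) / 4 := by rw [hβ]; ring
  refine (neg_deriv_deriv_divergence_logMeanGap _ _ _ hlam.ne').trans ?_
  rw [hβα]
  field_simp

/-- The Fisher information entry of the variance gamma geometry:
`-∂²D/∂λ∂μ` at `(λ,λ)` equals `T·C/λ²`, where
`D(λ,μ) = (4/(1-α²))·(1 - exp(-T·C·(log(βλ+(1-β)μ) - β·log λ - (1-β)·log μ)))`. -/
theorem vg_fisher_metric (T C α β : ℝ) (hT : 0 < T) (hC : 0 < C)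
    (hα : α ∈ Set.Ioo (-1 : ℝ) 1) (hβ : β = (1 - α) / 2)
    (lam : ℝ) (hlam : 0 < lam) :
    -(deriv (fun mu : ℝ =>
        deriv (fun l : ℝ =>
          (4 / (1 - α ^ 2)) *
            (1 - Real.exp (-(T * C *
              (Real.log (β * l + (1 - β) * mu)
                - β * Real.log l - (1 - β) * Real.log mu))))) lam) lam)
      = T * C / lam ^ 2 :=
  vg_fisher_metric_general T C α β hα hβ lam hlam
end

section
/- Let T > 0, C > 0, and α ∈ (-1,1) with β = (1-α)/2. Define D : (0,∞) × (0,∞) → ℝ by D(λ,μ) = (4/(1-α²))·(1 - exp(-T·C·(log(βλ+(1-β)μ) - β·log λ - (1-β)·log μ))). Then for every λ > 0, the negative of the third mixed partial derivative -∂³D/∂λ²∂μ evaluated at (λ, λ) equals -(1-α)·T·C/λ³. -/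
/-!
Write `D = K (1 - exp (-A g))` with `K = 4/(1-α²)`, `A = T C`, and `g(λ, μ)` the logarithm of the
ratio of the weighted arithmetic mean `βλ + (1-β)μ` to the weighted geometric mean `λ^β μ^(1-β)`.
On the diagonal `g` vanishes together with both of its first partial derivatives, so in
`∂_μ ∂_λ² D = K A ∂_μ (exp (-A g) (∂_λ² g - A (∂_λ g)²))` only the term `K A ∂_μ ∂_λ² g` survives,
and `∂_μ ∂_λ² g = 2β²(1-β)/λ³` there. Finally `K · 2β²(1-β) = 1 - α` for `β = (1-α)/2`.
-/

open Real Filter Topology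

theorem hasDerivAt_const_mul_one_sub_exp_neg {g : ℝ → ℝ} {g' x : ℝ} (K A : ℝ)
    (hg : HasDerivAt g g' x) :
    HasDerivAt (fun y => K * (1 - exp (-(A * g y)))) (K * A * g' * exp (-(A * g x))) x := by
  refine (((hg.const_mul A).fun_neg.exp.const_sub 1).const_mul K).congr_deriv ?_
  ring

theorem deriv_deriv_const_mul_one_sub_exp_neg_s18 {g g' : ℝ → ℝ} {g'' x : ℝ} (K A : ℝ)
    (hg : ∀ᶠ y in 𝓝 x, HasDerivAt g (g' y) y) (hg' : HasDerivAt g' g'' x) :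
    deriv (deriv fun y => K * (1 - exp (-(A * g y)))) x
      = K * A * (exp (-(A * g x)) * (g'' - A * g' x ^ 2)) := by
  have hderiv : deriv (fun y => K * (1 - exp (-(A * g y))))
      =ᶠ[𝓝 x] fun y => K * A * g' y * exp (-(A * g y)) := by
    filter_upwards [hg] with y hy
    exact (hasDerivAt_const_mul_one_sub_exp_neg K A hy).deriv
  rw [hderiv.deriv_eq]
  have hexp := (hg.self_of_nhds.const_mul A).fun_neg.exp
  refine ((hg'.const_mul (K * A)).fun_mul hexp).deriv.trans ?_
  ring

/-- `log` of the weighted arithmetic mean of `l` and `mu` over their weighted geometric mean. -/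
noncomputable def logAmGmGap (β l mu : ℝ) : ℝ :=
  log (β * l + (1 - β) * mu) - β * log l - (1 - β) * log mu

theorem logAmGmGap_self (β l : ℝ) : logAmGmGap β l l = 0 := by
  rw [logAmGmGap, show β * l + (1 - β) * l = l by ring]
  ring

section
variable {β l mu : ℝ}

theorem hasDerivAt_logAmGmGap_left (hs : β * l + (1 - β) * mu ≠ 0) (hl : l ≠ 0) :
    HasDerivAt (fun x => logAmGmGap β x mu) (β / (β * l + (1 - β) * mu) - β / l) l := by
  have hmean : HasDerivAt (fun x => β * x + (1 - β) * mu) β l := by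
    simpa using ((hasDerivAt_id l).const_mul β).add_const ((1 - β) * mu)
  refine (((hmean.log hs).fun_sub ((hasDerivAt_log hl).const_mul β)).sub_const
    ((1 - β) * log mu)).congr_deriv ?_
  ring

theorem hasDerivAt_logAmGmGap_right (hs : β * l + (1 - β) * mu ≠ 0) (hmu : mu ≠ 0) :
    HasDerivAt (fun y => logAmGmGap β l y)
      ((1 - β) / (β * l + (1 - β) * mu) - (1 - β) / mu) mu := by
  have hmean : HasDerivAt (fun y => β * l + (1 - β) * y) (1 - β) mu := by
    simpa using ((hasDerivAt_id mu).const_mul (1 - β)).const_add (β * l)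
  refine (((hmean.log hs).sub_const (β * log l)).fun_sub
    ((hasDerivAt_log hmu).const_mul (1 - β))).congr_deriv ?_
  ring

theorem hasDerivAt_deriv_logAmGmGap_left (hs : β * l + (1 - β) * mu ≠ 0) (hl : l ≠ 0) :
    HasDerivAt (fun x => β / (β * x + (1 - β) * mu) - β / x)
      (β / l ^ 2 - β ^ 2 / (β * l + (1 - β) * mu) ^ 2) l := by
  have hmean : HasDerivAt (fun x => β * x + (1 - β) * mu) β l := by
    simpa using ((hasDerivAt_id l).const_mul β).add_const ((1 - β) * mu)
  refine (((hasDerivAt_const l β).fun_div hmean hs).fun_sub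
    ((hasDerivAt_const l β).fun_div (hasDerivAt_id' l) hl)).congr_deriv ?_
  field_simp
  ring

/-- The `μ`-derivative, on the diagonal, of the second `λ`-derivative of `exp (-A g)`. -/
theorem hasDerivAt_exp_neg_mul_logAmGmGap_diag (A : ℝ) (hl : l ≠ 0) :
    HasDerivAt (fun mu => exp (-(A * logAmGmGap β l mu)) *
        (β / l ^ 2 - β ^ 2 / (β * l + (1 - β) * mu) ^ 2
          - A * (β / (β * l + (1 - β) * mu) - β / l) ^ 2))
      (2 * β ^ 2 * (1 - β) / l ^ 3) l := by
  have hdiag : β * l + (1 - β) * l = l := by ring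
  have hs : β * l + (1 - β) * l ≠ 0 := by rwa [hdiag]
  have hmean : HasDerivAt (fun y => β * l + (1 - β) * y) (1 - β) l := by
    simpa using ((hasDerivAt_id l).const_mul (1 - β)).const_add (β * l)
  have hexp := ((hasDerivAt_logAmGmGap_right hs hl).const_mul A).fun_neg.exp
  have hsecond := ((hasDerivAt_const l (β / l ^ 2)).fun_sub
    ((hasDerivAt_const l (β ^ 2)).fun_div (hmean.fun_pow 2) (pow_ne_zero 2 hs))).fun_sub
    ((((hasDerivAt_const l β).fun_div hmean hs).sub_const (β / l)).fun_pow 2 |>.const_mul A)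
  refine (hexp.fun_mul hsecond).congr_deriv ?_
  simp only [logAmGmGap_self, hdiag, mul_zero, neg_zero, exp_zero]
  field_simp
  ring

end

theorem vg_alpha_connection_general (T C α β : ℝ)
    (hα : α ∈ Set.Ioo (-1 : ℝ) 1) (hβ : β = (1 - α) / 2)
    (lam : ℝ) (hlam : 0 < lam) :
    -(deriv (fun mu : ℝ =>
        deriv (deriv (fun l : ℝ =>
          (4 / (1 - α ^ 2)) *
            (1 - Real.exp (-(T * C *
              (Real.log (β * l + (1 - β) * mu)
                - β * Real.log l - (1 - β) * Real.log mu)))))) lam) lam)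
      = -(1 - α) * T * C / lam ^ 3 := by
  obtain ⟨hα₁, hα₂⟩ := hα
  have hmean_ne : ∀ {l mu : ℝ}, 0 < l → 0 < mu → β * l + (1 - β) * mu ≠ 0 := fun hl hmu => by
    have : 0 < 1 - β := by linarith
    have : 0 < β := by linarith
    positivity
  have hsecond : (fun mu => deriv (deriv fun l => 4 / (1 - α ^ 2) *
      (1 - exp (-(T * C * logAmGmGap β l mu)))) lam)
      =ᶠ[𝓝 lam] fun mu => 4 / (1 - α ^ 2) * (T * C) * (exp (-(T * C * logAmGmGap β lam mu)) *
        (β / lam ^ 2 - β ^ 2 / (β * lam + (1 - β) * mu) ^ 2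
          - T * C * (β / (β * lam + (1 - β) * mu) - β / lam) ^ 2)) := by
    filter_upwards [Ioi_mem_nhds hlam] with mu hmu
    refine deriv_deriv_const_mul_one_sub_exp_neg_s18 _ _ ?_
      (hasDerivAt_deriv_logAmGmGap_left (hmean_ne hlam hmu) hlam.ne')
    filter_upwards [Ioi_mem_nhds hlam] with l hl
    exact hasDerivAt_logAmGmGap_left (hmean_ne hl hmu) hl.ne'
  have hthird := (hasDerivAt_exp_neg_mul_logAmGmGap_diag (β := β) (T * C) hlam.ne').const_mul
    (4 / (1 - α ^ 2) * (T * C))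
  have hK : 1 - α ^ 2 ≠ 0 := by nlinarith
  simp only [← logAmGmGap.eq_1]
  rw [hsecond.deriv_eq, hthird.deriv]
  subst hβ
  field_simp
  ring

/-- The nonvanishing α-connection component of the variance gamma geometry:
`-∂³D/∂λ²∂μ` at `(λ,λ)` equals `-(1-α)·T·C/λ³`, where
`D(λ,μ) = (4/(1-α²))·(1 - exp(-T·C·(log(βλ+(1-β)μ) - β·log λ - (1-β)·log μ)))`. -/
theorem vg_alpha_connection (T C α β : ℝ) (hT : 0 < T) (hC : 0 < C)
    (hα : α ∈ Set.Ioo (-1 : ℝ) 1) (hβ : β = (1 - α) / 2)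
    (lam : ℝ) (hlam : 0 < lam) :
    -(deriv (fun mu : ℝ =>
        deriv (deriv (fun l : ℝ =>
          (4 / (1 - α ^ 2)) *
            (1 - Real.exp (-(T * C *
              (Real.log (β * l + (1 - β) * mu)
                - β * Real.log l - (1 - β) * Real.log mu)))))) lam) lam)
      = -(1 - α) * T * C / lam ^ 3 :=
  vg_alpha_connection_general T C α β hα hβ lam hlam
end

section
/- Let a ∈ (0,2) with a ≠ 1, T > 0, C > 0, and λ, μ > 0. Define Δ : (-1,1) → ℝ by Δ(α) = T·C·Γ(-a)·(((1-α)/2)·λ^a + ((1+α)/2)·μ^a - (((1-α)/2)λ + ((1+α)/2)μ)^a), where Γ is the real Gamma function and powers are real powers. Then the function α ↦ (4/(1-α²))·(1 - exp(-Δ(α))) tends to T·C·Γ(-a)·((a-1)·λ^a - a·μ·λ^{a-1} + μ^a) as α tends to -1 from the right. -/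
open Real Filter Topology

/-!
`Δ` vanishes at `α = -1`, and `4 / (1 - α²) = (4 / (1 - α)) · (1 + α)⁻¹`, so the α-divergence is
`4 / (1 - α)` times a difference quotient of `1 - exp (-Δ)` at `-1`. Its limit is therefore
`2 · Δ'(-1)`, and differentiating the power mean `(((1-α)/2) λ + ((1+α)/2) μ)^a` at `α = -1`,
where it equals `λ^a`, gives the Kullback–Leibler formula.
-/

/-- Jensen gap of `t ↦ t ^ a` at the weights `(1 - α) / 2`, `(1 + α) / 2`; `Δ(α) = T C Γ(-a)` times it. -/
noncomputable def jensenGap (a lam mu α : ℝ) : ℝ :=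
  ((1 - α) / 2) * lam ^ a + ((1 + α) / 2) * mu ^ a
    - (((1 - α) / 2) * lam + ((1 + α) / 2) * mu) ^ a

lemma jensenGap_neg_one (a lam mu : ℝ) : jensenGap a lam mu (-1) = 0 := by
  norm_num [jensenGap]

lemma hasDerivAt_jensenGap_neg_one {a lam : ℝ} (mu : ℝ) (hlam : lam ≠ 0) :
    HasDerivAt (jensenGap a lam mu)
      (((a - 1) * lam ^ a - a * mu * lam ^ (a - 1) + mu ^ a) / 2) (-1) := by
  have hweights : HasDerivAt (fun α : ℝ => (1 - α) / 2) (-1 / 2) (-1) := by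
    simpa using ((hasDerivAt_id (-1 : ℝ)).const_sub 1).div_const 2
  have hweights' : HasDerivAt (fun α : ℝ => (1 + α) / 2) (1 / 2) (-1) := by
    simpa using ((hasDerivAt_id (-1 : ℝ)).const_add 1).div_const 2
  have hmean : HasDerivAt (fun α : ℝ => ((1 - α) / 2) * lam + ((1 + α) / 2) * mu)
      ((mu - lam) / 2) (-1) :=
    ((hweights.mul_const lam).fun_add (hweights'.mul_const mu)).congr_deriv (by ring)
  have hmean_at : ((1 - (-1 : ℝ)) / 2) * lam + ((1 + (-1 : ℝ)) / 2) * mu = lam := by ring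
  have hpow := hmean.rpow_const (p := a) (Or.inl (by rwa [hmean_at]))
  rw [hmean_at] at hpow
  have hlam_pow : lam ^ (a - 1) * lam = lam ^ a := by
    rw [← rpow_add_one hlam, sub_add_cancel]
  exact (((hweights.mul_const (lam ^ a)).fun_add (hweights'.mul_const (mu ^ a))).fun_sub
    hpow).congr_deriv (by linear_combination (a / 2) * hlam_pow)

lemma HasDerivAt.one_sub_exp_neg {f : ℝ → ℝ} {f' x : ℝ} (hf : HasDerivAt f f' x)
    (hfx : f x = 0) : HasDerivAt (fun y => 1 - Real.exp (-f y)) f' x := by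
  simpa [hfx] using hf.fun_neg.exp.const_sub 1

lemma tendsto_four_div_one_sub_sq_mul {f : ℝ → ℝ} {f' : ℝ} (hf : HasDerivAt f f' (-1))
    (hf0 : f (-1) = 0) :
    Tendsto (fun α => 4 / (1 - α ^ 2) * f α) (𝓝[≠] (-1)) (𝓝 (2 * f')) := by
  have hslope : Tendsto (fun α => (α + 1)⁻¹ * f α) (𝓝[≠] (-1)) (𝓝 f') := by
    refine (hasDerivAt_iff_tendsto_slope.mp hf).congr fun α => ?_
    rw [slope_def_field, hf0, sub_zero, sub_neg_eq_add, div_eq_inv_mul]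
  have hfactor : Tendsto (fun α : ℝ => 4 / (1 - α)) (𝓝[≠] (-1)) (𝓝 2) := by
    have := tendsto_const_nhds (x := (4 : ℝ)).div (tendsto_const_nhds.sub tendsto_id)
      (by norm_num : (1 : ℝ) - -1 ≠ 0)
    norm_num at this
    exact tendsto_nhdsWithin_of_tendsto_nhds this
  refine (hfactor.mul hslope).congr' ?_
  have hne_one : ∀ᶠ α in 𝓝[≠] (-1 : ℝ), α ≠ 1 :=
    nhdsWithin_le_nhds (eventually_ne_nhds (by norm_num))
  filter_upwards [self_mem_nhdsWithin, hne_one] with α (hα : α ≠ -1) hα1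
  have h1 : 1 - α ≠ 0 := sub_ne_zero.mpr (Ne.symm hα1)
  have h2 : α + 1 ≠ 0 := fun h => hα (eq_neg_of_add_eq_zero_left h)
  have h3 : 1 - α ^ 2 ≠ 0 := by
    rw [show 1 - α ^ 2 = (1 - α) * (α + 1) by ring]; exact mul_ne_zero h1 h2
  field_simp
  ring

theorem gts_alpha_div_tendsto_kl_general (a T C lam mu : ℝ)
    (hlam : 0 < lam) :
    Filter.Tendsto
      (fun α : ℝ => (4 / (1 - α ^ 2)) *
        (1 - Real.exp (-(T * C * Real.Gamma (-a) *
          (((1 - α) / 2) * lam ^ a + ((1 + α) / 2) * mu ^ a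
            - (((1 - α) / 2) * lam + ((1 + α) / 2) * mu) ^ a)))))
      (𝓝[Set.Ioo (-1 : ℝ) 1] (-1))
      (𝓝 (T * C * Real.Gamma (-a) *
        ((a - 1) * lam ^ a - a * mu * lam ^ (a - 1) + mu ^ a))) := by
  have hΔ := HasDerivAt.one_sub_exp_neg
    ((hasDerivAt_jensenGap_neg_one (a := a) mu hlam.ne').const_mul (T * C * Gamma (-a)))
    (by rw [jensenGap_neg_one, mul_zero])
  have hIoo : 𝓝[Set.Ioo (-1 : ℝ) 1] (-1) ≤ 𝓝[≠] (-1) :=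
    nhdsWithin_mono _ fun α hα => hα.1.ne'
  have hlim := (tendsto_four_div_one_sub_sq_mul hΔ (by simp [jensenGap_neg_one])).mono_left hIoo
  rwa [mul_left_comm, mul_div_cancel₀ _ two_ne_zero] at hlim

/-- The `α → -1⁺` limit of the α-divergence
`(4/(1-α²))·(1 - exp(-Δ(α)))` with
`Δ(α) = T·C·Γ(-a)·(((1-α)/2)·λ^a + ((1+α)/2)·μ^a - (((1-α)/2)λ+((1+α)/2)μ)^a)`
recovers the Kullback–Leibler divergence
`T·C·Γ(-a)·((a-1)·λ^a - a·μ·λ^{a-1} + μ^a)`. -/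
theorem gts_alpha_div_tendsto_kl (a T C lam mu : ℝ)
    (ha : a ∈ Set.Ioo (0 : ℝ) 2) (ha1 : a ≠ 1) (hT : 0 < T) (hC : 0 < C)
    (hlam : 0 < lam) (hmu : 0 < mu) :
    Filter.Tendsto
      (fun α : ℝ => (4 / (1 - α ^ 2)) *
        (1 - Real.exp (-(T * C * Real.Gamma (-a) *
          (((1 - α) / 2) * lam ^ a + ((1 + α) / 2) * mu ^ a
            - (((1 - α) / 2) * lam + ((1 + α) / 2) * mu) ^ a)))))
      (𝓝[Set.Ioo (-1 : ℝ) 1] (-1))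
      (𝓝 (T * C * Real.Gamma (-a) *
        ((a - 1) * lam ^ a - a * mu * lam ^ (a - 1) + mu ^ a))) :=
  gts_alpha_div_tendsto_kl_general a T C lam mu hlam
end
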